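/- arXiv:1501.01802 — 6 statements merged into one kernel-verified Lean document; each statement's English description precedes it below -/
import Mathlib

section
/- Let γ ∈ (-2, 0). Define σ(v) = |v|^{γ/2 - 1} (|v|² I − v ⊗ v) for v ∈ ℝ³ \ {0}, where I is the 3×3 identity matrix. Then there is a constant C (depending only on γ) such that for all nonzero v, w ∈ ℝ³, ‖σ(v) − σ(w)‖ ≤ C |v − w| (|v|^{γ/2} + |w|^{γ/2}), where ‖·‖ is the Frobenius norm. -/
open Matrix

set_option maxHeartbeats 1000000

noncomputable section

/-- Frobenius norm of a 3×3 real matrix. -/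
def frob (M : Matrix (Fin 3) (Fin 3) ℝ) : ℝ := Real.sqrt (Matrix.trace (M * Mᵀ))

/-- The matrix `σ(v) = |v|^{γ/2 - 1} (|v|² I − v ⊗ v)`. -/
def sigmaMat (γ : ℝ) (v : EuclideanSpace ℝ (Fin 3)) : Matrix (Fin 3) (Fin 3) ℝ :=
  ‖v‖ ^ (γ / 2 - 1) •
    (‖v‖ ^ 2 • (1 : Matrix (Fin 3) (Fin 3) ℝ) - Matrix.of fun i j => v i * v j)

attribute [local instance] Matrix.frobeniusSeminormedAddCommGroup Matrix.frobeniusNormedSpace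

lemma trace_mul_transpose (M : Matrix (Fin 3) (Fin 3) ℝ) :
    Matrix.trace (M * Mᵀ) = ∑ i, ∑ j, (M i j) ^ 2 := by
  simp [Matrix.trace, Matrix.mul_apply, Matrix.diag, sq]

lemma frob_eq (M : Matrix (Fin 3) (Fin 3) ℝ) : frob M = ‖M‖ := by
  rw [frob, trace_mul_transpose, Matrix.frobenius_norm_def, Real.sqrt_eq_rpow]
  congr 1
  refine Finset.sum_congr rfl fun i _ => Finset.sum_congr rfl fun j _ => ?_
  rw [Real.rpow_two, Real.norm_eq_abs, sq_abs]

lemma norm_one_mat : ‖(1 : Matrix (Fin 3) (Fin 3) ℝ)‖ = Real.sqrt 3 := by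
  rw [← frob_eq, frob]
  simp [Matrix.trace_one]

lemma outer_norm (x y : EuclideanSpace ℝ (Fin 3)) :
    ‖(Matrix.of fun i j => x i * y j : Matrix (Fin 3) (Fin 3) ℝ)‖ = ‖x‖ * ‖y‖ := by
  rw [← frob_eq, frob, trace_mul_transpose]
  have h : ∑ i, ∑ j, ((Matrix.of fun i j => x i * y j : Matrix (Fin 3) (Fin 3) ℝ) i j) ^ 2
      = (∑ i, (x i) ^ 2) * (∑ j, (y j) ^ 2) := by
    simp_rw [Matrix.of_apply, mul_pow, ← Finset.mul_sum, ← Finset.sum_mul]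
  rw [h, Real.sqrt_mul (by positivity)]
  congr 1 <;> rw [EuclideanSpace.norm_eq] <;> simp [Real.norm_eq_abs, sq_abs]

lemma keyA {p a b : ℝ} (hp0 : 0 ≤ p) (hp1 : p ≤ 1) (hb : 0 < b) (hab : b ≤ a) :
    a ^ p - b ^ p ≤ (a - b) * b ^ (p - 1) := by
  have ha : 0 < a := hb.trans_le hab
  have h1 : a ^ (p - 1) ≤ b ^ (p - 1) :=
    Real.rpow_le_rpow_of_nonpos hb hab (by linarith)
  have h2 : a ^ p = a ^ (p - 1) * a := by
    rw [← Real.rpow_add_one ha.ne' (p - 1)]; ring_nf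
  have h3 : b ^ p = b ^ (p - 1) * b := by
    rw [← Real.rpow_add_one hb.ne' (p - 1)]; ring_nf
  rw [h2, h3]
  nlinarith [mul_le_mul_of_nonneg_right h1 ha.le]

lemma keyB {p a b : ℝ} (hp2 : -2 ≤ p) (hp1 : p ≤ -1) (hb : 0 < b) (hab : b ≤ a) :
    b ^ p - a ^ p ≤ 2 * (a - b) * b ^ (p - 1) := by
  have ha : 0 < a := hb.trans_le hab
  set δ : ℝ := -p with hδ
  have hδ1 : 1 ≤ δ := by simp [hδ]; linarith
  have hδ2 : δ ≤ 2 := by simp [hδ]; linarith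
  have hA : (0:ℝ) < a ^ δ := Real.rpow_pos_of_pos ha δ
  have hB : (0:ℝ) < b ^ δ := Real.rpow_pos_of_pos hb δ
  -- Bernoulli at 1 + s = b/a
  have hs : (-1:ℝ) ≤ b / a - 1 := by
    have : 0 ≤ b / a := by positivity
    linarith
  have hber : 1 + δ * (b / a - 1) ≤ (1 + (b / a - 1)) ^ δ :=
    one_add_mul_self_le_rpow_one_add hs hδ1
  have hber2 : 1 + δ * (b / a - 1) ≤ b ^ δ / a ^ δ := by
    rwa [add_sub_cancel, Real.div_rpow hb.le ha.le] at hber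
  -- so (a^δ − b^δ) a ≤ δ (a − b) a^δ
  have hkey : (a ^ δ - b ^ δ) * a ≤ δ * (a - b) * a ^ δ := by
    have h := mul_le_mul_of_nonneg_right hber2 (by positivity : (0:ℝ) ≤ a ^ δ * a)
    have hL : (1 + δ * (b / a - 1)) * (a ^ δ * a)
        = a ^ δ * a - δ * (a - b) * a ^ δ := by
      field_simp; ring
    have hR : b ^ δ / a ^ δ * (a ^ δ * a) = b ^ δ * a := by
      field_simp
    rw [hL, hR] at h
    nlinarith
  have hBA : b ^ δ ≤ a ^ δ := Real.rpow_le_rpow hb.le hab (by linarith)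
  have hmain : (a ^ δ - b ^ δ) * b ≤ 2 * (a - b) * a ^ δ := by
    nlinarith [mul_nonneg (sub_nonneg.mpr hab) (sub_nonneg.mpr hBA),
      mul_nonneg (sub_nonneg.mpr hab) hA.le, hkey, hb.le]
  -- rewrite rpow's with negative exponents
  have hbp : b ^ p = (b ^ δ)⁻¹ := by
    rw [show p = -δ by rw [hδ]; ring, Real.rpow_neg hb.le]
  have hap : a ^ p = (a ^ δ)⁻¹ := by
    rw [show p = -δ by rw [hδ]; ring, Real.rpow_neg ha.le]
  have hbp1 : b ^ (p - 1) = (b ^ δ * b)⁻¹ := by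
    rw [show p - 1 = -(δ + 1) by rw [hδ]; ring, Real.rpow_neg hb.le,
      Real.rpow_add_one hb.ne']
  rw [hbp, hap, hbp1]
  have e1 : (b ^ δ)⁻¹ - (a ^ δ)⁻¹ = (a ^ δ - b ^ δ) / (b ^ δ * a ^ δ) := by
    field_simp
  have e2 : 2 * (a - b) * (b ^ δ * b)⁻¹ = (2 * (a - b)) / (b ^ δ * b) := by
    ring
  rw [e1, e2, div_le_div_iff₀ (by positivity) (by positivity)]
  calc (a ^ δ - b ^ δ) * (b ^ δ * b) = ((a ^ δ - b ^ δ) * b) * b ^ δ := by ring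
    _ ≤ (2 * (a - b) * a ^ δ) * b ^ δ := mul_le_mul_of_nonneg_right hmain hB.le
    _ = 2 * (a - b) * (b ^ δ * a ^ δ) := by ring

lemma sigma_decomp (γ : ℝ) (v : EuclideanSpace ℝ (Fin 3)) (hv : v ≠ 0) :
    sigmaMat γ v = ‖v‖ ^ (γ / 2 + 1) • (1 : Matrix (Fin 3) (Fin 3) ℝ)
      - ‖v‖ ^ (γ / 2 - 1) • Matrix.of (fun i j => v i * v j) := by
  have hv' : (0:ℝ) < ‖v‖ := norm_pos_iff.mpr hv
  rw [sigmaMat, smul_sub, smul_smul]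
  congr 2
  rw [← Real.rpow_natCast ‖v‖ 2, ← Real.rpow_add hv']
  norm_num
  congr 1
  ring

/-- for `γ ∈ (-2,0)` there is a constant `C` (depending only on `γ`) with
`‖σ(v) − σ(w)‖ ≤ C |v − w| (|v|^{γ/2} + |w|^{γ/2})` for all nonzero `v, w ∈ ℝ³`,
where `‖·‖` is the Frobenius norm. -/
theorem statement3 (γ : ℝ) (hγ : γ ∈ Set.Ioo (-2 : ℝ) 0) :
    ∃ C : ℝ, 0 < C ∧ ∀ v w : EuclideanSpace ℝ (Fin 3), v ≠ 0 → w ≠ 0 →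
      frob (sigmaMat γ v - sigmaMat γ w) ≤
        C * ‖v - w‖ * (‖v‖ ^ (γ / 2) + ‖w‖ ^ (γ / 2)) := by
  obtain ⟨hγ1, hγ2⟩ := hγ
  refine ⟨6, by norm_num, ?_⟩
  have main : ∀ v w : EuclideanSpace ℝ (Fin 3), v ≠ 0 → w ≠ 0 → ‖w‖ ≤ ‖v‖ →
      frob (sigmaMat γ v - sigmaMat γ w) ≤
        6 * ‖v - w‖ * (‖v‖ ^ (γ / 2) + ‖w‖ ^ (γ / 2)) := by
    intro v w hv hw hba
    set a : ℝ := ‖v‖ with hadef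
    set b : ℝ := ‖w‖ with hbdef
    have ha : (0:ℝ) < a := norm_pos_iff.mpr hv
    have hb : (0:ℝ) < b := norm_pos_iff.mpr hw
    set α : ℝ := γ / 2 + 1 with hα
    set β : ℝ := γ / 2 - 1 with hβ
    set Pv : Matrix (Fin 3) (Fin 3) ℝ := Matrix.of (fun i j => v i * v j) with hPv
    set Pw : Matrix (Fin 3) (Fin 3) ℝ := Matrix.of (fun i j => w i * w j) with hPw
    have hdecomp : sigmaMat γ v - sigmaMat γ w
        = (a ^ α - b ^ α) • (1 : Matrix (Fin 3) (Fin 3) ℝ)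
          - (a ^ β • (Pv - Pw) + (a ^ β - b ^ β) • Pw) := by
      rw [sigma_decomp γ v hv, sigma_decomp γ w hw]
      simp only [sub_smul, smul_sub]
      abel
    rw [frob_eq, hdecomp]
    have hPvw : Pv - Pw = Matrix.of (fun i j => v i * (v - w) j)
        + Matrix.of (fun i j => (v - w) i * w j) := by
      ext i j
      simp only [Matrix.sub_apply, Matrix.add_apply, Matrix.of_apply, hPv, hPw,
        PiLp.sub_apply]
      ring
    have hPbound : ‖Pv - Pw‖ ≤ 2 * a * ‖v - w‖ := by
      rw [hPvw]
      calc ‖(Matrix.of (fun i j => v i * (v - w) j) : Matrix (Fin 3) (Fin 3) ℝ)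
            + Matrix.of (fun i j => (v - w) i * w j)‖
          ≤ ‖(Matrix.of (fun i j => v i * (v - w) j) : Matrix (Fin 3) (Fin 3) ℝ)‖
            + ‖(Matrix.of (fun i j => (v - w) i * w j) : Matrix (Fin 3) (Fin 3) ℝ)‖ :=
            norm_add_le _ _
        _ = a * ‖v - w‖ + ‖v - w‖ * b := by rw [outer_norm, outer_norm]
        _ ≤ 2 * a * ‖v - w‖ := by nlinarith [norm_nonneg (v - w)]
    have htri : ‖(a ^ α - b ^ α) • (1 : Matrix (Fin 3) (Fin 3) ℝ)
          - (a ^ β • (Pv - Pw) + (a ^ β - b ^ β) • Pw)‖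
        ≤ |a ^ α - b ^ α| * Real.sqrt 3
          + (a ^ β * (2 * a * ‖v - w‖) + |a ^ β - b ^ β| * (b * b)) := by
      refine (norm_sub_le _ _).trans ?_
      gcongr ?_ + ?_
      · rw [norm_smul, Real.norm_eq_abs, norm_one_mat]
      · refine (norm_add_le _ _).trans ?_
        gcongr ?_ + ?_
        · rw [norm_smul, Real.norm_eq_abs, abs_of_pos (Real.rpow_pos_of_pos ha β)]
          exact mul_le_mul_of_nonneg_left hPbound (Real.rpow_pos_of_pos ha β).le
        · rw [norm_smul, Real.norm_eq_abs, hPw, outer_norm]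
    refine (htri).trans ?_
    -- now pure real arithmetic
    have hα0 : 0 ≤ α := by rw [hα]; linarith
    have hα1 : α ≤ 1 := by rw [hα]; linarith
    have hβ2 : -2 ≤ β := by rw [hβ]; linarith
    have hβ1 : β ≤ -1 := by rw [hβ]; linarith
    have hαmono : b ^ α ≤ a ^ α := Real.rpow_le_rpow hb.le hba hα0
    have hβmono : a ^ β ≤ b ^ β := Real.rpow_le_rpow_of_nonpos hb hba (by linarith)
    have habs1 : |a ^ α - b ^ α| = a ^ α - b ^ α := abs_of_nonneg (by linarith)
    have habs2 : |a ^ β - b ^ β| = b ^ β - a ^ β := by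
      rw [abs_sub_comm]; exact abs_of_nonneg (by linarith)
    have hd : a - b ≤ ‖v - w‖ := norm_sub_norm_le v w
    have hd0 : 0 ≤ a - b := by linarith
    have hvw0 : 0 ≤ ‖v - w‖ := norm_nonneg _
    have hkA : a ^ α - b ^ α ≤ (a - b) * b ^ (γ / 2) := by
      have := keyA hα0 hα1 hb hba
      rwa [show α - 1 = γ / 2 by rw [hα]; ring] at this
    have hkB : (b ^ β - a ^ β) * (b * b) ≤ 2 * (a - b) * b ^ (γ / 2) := by
      have h := keyB hβ2 hβ1 hb hba
      have hb2 : b ^ (β - 1) * (b * b) = b ^ (γ / 2) := by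
        rw [show γ / 2 = (β - 1) + 1 + 1 by rw [hβ]; ring,
          Real.rpow_add_one hb.ne', Real.rpow_add_one hb.ne']
        ring
      calc (b ^ β - a ^ β) * (b * b) ≤ 2 * (a - b) * b ^ (β - 1) * (b * b) := by
            nlinarith [mul_pos hb hb]
        _ = 2 * (a - b) * b ^ (γ / 2) := by rw [mul_assoc, hb2]
    have hkβa : a ^ β * (2 * a * ‖v - w‖) = 2 * a ^ (γ / 2) * ‖v - w‖ := by
      rw [show γ / 2 = β + 1 by rw [hβ]; ring, Real.rpow_add_one ha.ne']
      ring
    have hsqrt3 : Real.sqrt 3 ≤ 2 := by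
      rw [show (2:ℝ) = Real.sqrt 4 by rw [show (4:ℝ) = 2^2 by norm_num, Real.sqrt_sq]; norm_num]
      exact Real.sqrt_le_sqrt (by norm_num)
    have hpa : (0:ℝ) < a ^ (γ / 2) := Real.rpow_pos_of_pos ha _
    have hpb : (0:ℝ) < b ^ (γ / 2) := Real.rpow_pos_of_pos hb _
    rw [habs1, habs2, hkβa]
    have h1 : (a ^ α - b ^ α) * Real.sqrt 3 ≤ 2 * ((a - b) * b ^ (γ / 2)) := by
      have hnn : 0 ≤ a ^ α - b ^ α := by linarith
      nlinarith [Real.sqrt_nonneg 3]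
    have h2 : (a - b) * b ^ (γ / 2) ≤ ‖v - w‖ * b ^ (γ / 2) :=
      mul_le_mul_of_nonneg_right hd hpb.le
    nlinarith [mul_le_mul_of_nonneg_right hvw0 hpa.le]
  intro v w hv hw
  rcases le_total ‖w‖ ‖v‖ with h | h
  · exact main v w hv hw h
  · have := main w v hw hv h
    calc frob (sigmaMat γ v - sigmaMat γ w)
        = frob (sigmaMat γ w - sigmaMat γ v) := by
          rw [frob_eq, frob_eq, norm_sub_rev]
      _ ≤ 6 * ‖w - v‖ * (‖w‖ ^ (γ / 2) + ‖v‖ ^ (γ / 2)) := this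
      _ = 6 * ‖v - w‖ * (‖v‖ ^ (γ / 2) + ‖w‖ ^ (γ / 2)) := by
          rw [norm_sub_rev]; ring
end
end

section
/- Let γ ∈ (-2, 0) and let a(v) = |v|^{2+γ}(I − (v⊗v)/|v|²) for v ≠ 0 and a(0)=0, and φ_η(x) = (3/(4πη³)) 1_{|x|<η}. Then there is a constant C > 0 (depending only on γ) such that for all η ∈ (0,1) and all v ∈ ℝ³, ‖(a ⋆ φ_η)(v) − a(v)‖ ≤ C η² (η + |v|)^γ. -/
/-!
Entrywise, `(a ⋆ φ_η)(v) − a(v) = ∫ φ_η(x) (a(v − x) − a(v)) dx` because `∫ φ_η = 1`.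
If `|v| ≤ 2η`, both terms are `O((η + |v|)^{2+γ}) = O(η² (η + |v|)^γ)` since `a` is homogeneous
of degree `2 + γ`. If `|v| > 2η`, the segment from `v` to `v − x` stays at distance at least
`|v| − η ≥ (η + |v|)/3` from the origin, so Taylor's formula of order two along it gives
`a(v − x) = a(v) − Da(v) x + O(η² (η + |v|)^γ)`, and the linear term integrates to zero against
the even mollifier. The second derivative is computed from `a(w)ᵢⱼ = (|w|²)^{γ/2} B(w, w)ᵢⱼ`,
where `B` is the polarization of `|w|² I − w ⊗ w`.
-/

open Matrix MeasureTheory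

noncomputable section

/-- The matrix `a(v) = |v|^γ (|v|² I − v ⊗ v)` (which equals
`|v|^{2+γ}(I − (v⊗v)/|v|²)` for `v ≠ 0`, and `0` at `v = 0` since `γ < 0`). -/
def aMat (γ : ℝ) (v : EuclideanSpace ℝ (Fin 3)) : Matrix (Fin 3) (Fin 3) ℝ :=
  ‖v‖ ^ γ •
    (‖v‖ ^ 2 • (1 : Matrix (Fin 3) (Fin 3) ℝ) - Matrix.of fun i j => v i * v j)

/-- The uniform mollifier `φ_η(x) = (3/(4πη³)) 1_{|x|<η}`. -/
def phiMol (η : ℝ) (x : EuclideanSpace ℝ (Fin 3)) : ℝ :=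
  if ‖x‖ < η then 3 / (4 * Real.pi * η ^ 3) else 0

/-- The (entrywise) convolution `(a ⋆ φ_η)(v)`. -/
def aConv (γ η : ℝ) (v : EuclideanSpace ℝ (Fin 3)) : Matrix (Fin 3) (Fin 3) ℝ :=
  Matrix.of fun i j => ∫ x, phiMol η x * aMat γ (v - x) i j

open Set Metric
open scoped Real

local notation "ℝ³" => EuclideanSpace ℝ (Fin 3)

def polarForm (w y : ℝ³) : Matrix (Fin 3) (Fin 3) ℝ :=
  inner ℝ w y • 1 - of fun i j => (w i * y j + y i * w j) / 2

lemma sq_rpow_half {x : ℝ} (hx : 0 ≤ x) (γ : ℝ) : (x ^ 2) ^ (γ / 2) = x ^ γ := by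
  rw [← Real.rpow_natCast, ← Real.rpow_mul hx]
  ring_nf

lemma aMat_apply_eq (γ : ℝ) (w : ℝ³) (i j : Fin 3) :
    aMat γ w i j = (‖w‖ ^ 2) ^ (γ / 2) * polarForm w w i j := by
  simp [aMat, polarForm, sq_rpow_half (norm_nonneg w)]

lemma abs_polarForm_apply_le (w y : ℝ³) (i j : Fin 3) :
    |polarForm w y i j| ≤ 2 * ‖w‖ * ‖y‖ := by
  have hδ : |(1 : Matrix (Fin 3) (Fin 3) ℝ) i j| ≤ 1 := by
    rw [one_apply]; split_ifs <;> simp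
  have hinner : |inner ℝ w y * (1 : Matrix (Fin 3) (Fin 3) ℝ) i j| ≤ ‖w‖ * ‖y‖ := by
    rw [abs_mul]
    exact (mul_le_of_le_one_right (abs_nonneg _) hδ).trans (abs_real_inner_le_norm w y)
  have hcoord : ∀ (a b : ℝ³) (k l : Fin 3), |a k * b l| ≤ ‖a‖ * ‖b‖ := fun a b k l => by
    rw [abs_mul]
    exact mul_le_mul (PiLp.norm_apply_le a k) (PiLp.norm_apply_le b l) (abs_nonneg _)
      (norm_nonneg a)
  simp only [polarForm, Matrix.sub_apply, Matrix.smul_apply, of_apply, smul_eq_mul]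
  have := hcoord w y i j
  have := hcoord y w i j
  calc _ ≤ |inner ℝ w y * (1 : Matrix (Fin 3) (Fin 3) ℝ) i j|
        + (|w i * y j| + |y i * w j|) / 2 := by
        refine (abs_sub _ _).trans (add_le_add_right ?_ _)
        rw [abs_div, abs_two]
        exact div_le_div_of_nonneg_right (abs_add_le _ _) zero_le_two
    _ ≤ 2 * ‖w‖ * ‖y‖ := by linarith

lemma abs_aMat_apply_le (γ : ℝ) (w : ℝ³) (i j : Fin 3) :
    |aMat γ w i j| ≤ 2 * ‖w‖ ^ (γ + 2) := by
  rcases eq_or_ne w 0 with rfl | hw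
  · simp [aMat]; positivity
  have hpow : (‖w‖ ^ 2) ^ (γ / 2) * ‖w‖ ^ 2 = ‖w‖ ^ (γ + 2) := by
    rw [← Real.rpow_natCast, ← Real.rpow_mul (norm_nonneg w),
      ← Real.rpow_add (norm_pos_iff.mpr hw)]
    ring_nf
  rw [aMat_apply_eq, abs_mul, abs_of_nonneg (by positivity), ← hpow]
  have := abs_polarForm_apply_le w w i j
  nlinarith [Real.rpow_nonneg (sq_nonneg ‖w‖) (γ / 2)]

lemma frob_le_of_abs_apply_le {M : Matrix (Fin 3) (Fin 3) ℝ} {K : ℝ}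
    (hM : ∀ i j, |M i j| ≤ K) : frob M ≤ 3 * K := by
  have hK : 0 ≤ K := (abs_nonneg _).trans (hM 0 0)
  have htrace : trace (M * Mᵀ) ≤ ∑ _i : Fin 3, ∑ _j : Fin 3, K * K := by
    simp only [trace, diag, mul_apply, transpose_apply]
    refine Finset.sum_le_sum fun i _ => Finset.sum_le_sum fun j _ => ?_
    rw [← abs_mul_abs_self]
    exact mul_self_le_mul_self (abs_nonneg _) (hM i j)
  rw [frob, Real.sqrt_le_left (by positivity)]
  simpa [mul_pow, ← sq] using htrace.trans_eq (by norm_num; ring)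

lemma phiMol_neg (η : ℝ) (x : ℝ³) : phiMol η (-x) = phiMol η x := by
  simp [phiMol]

lemma phiMol_mul_eq_indicator (η : ℝ) (g : ℝ³ → ℝ) :
    (fun x => phiMol η x * g x) = (ball 0 η).indicator (fun x => 3 / (4 * π * η ^ 3) * g x) := by
  ext x
  by_cases hx : ‖x‖ < η <;> simp [phiMol, hx, indicator]

lemma integral_phiMol_mul (η : ℝ) (g : ℝ³ → ℝ) :
    ∫ x, phiMol η x * g x = 3 / (4 * π * η ^ 3) * ∫ x in ball 0 η, g x := by
  rw [phiMol_mul_eq_indicator, integral_indicator measurableSet_ball, integral_const_mul]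

lemma mul_volume_real_ball {η : ℝ} (hη : 0 < η) :
    3 / (4 * π * η ^ 3) * volume.real (ball (0 : ℝ³) η) = 1 := by
  rw [measureReal_def, EuclideanSpace.volume_ball_fin_three, ENNReal.toReal_mul,
    ENNReal.toReal_pow, ENNReal.toReal_ofReal hη.le, ENNReal.toReal_ofReal (by positivity)]
  field_simp

lemma integral_phiMol {η : ℝ} (hη : 0 < η) : ∫ x, phiMol η x = 1 := by
  simpa using (integral_phiMol_mul η fun _ => 1).trans (by simpa using mul_volume_real_ball hη)

lemma abs_integral_phiMol_mul_le {η M : ℝ} (hη : 0 < η) {g : ℝ³ → ℝ}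
    (hM : ∀ x, ‖x‖ < η → |g x| ≤ M) : |∫ x, phiMol η x * g x| ≤ M := by
  have hball := norm_setIntegral_le_of_norm_le_const (f := g) (measure_ball_lt_top (μ := volume))
    fun x hx => hM x (mem_ball_zero_iff.mp hx)
  rw [integral_phiMol_mul, abs_mul, abs_of_pos (by positivity)]
  calc _ ≤ 3 / (4 * π * η ^ 3) * (M * volume.real (ball (0 : ℝ³) η)) := by gcongr; exact hball
    _ = M := by rw [mul_left_comm, mul_volume_real_ball hη, mul_one]

lemma integrable_phiMol_mul {η M : ℝ} {g : ℝ³ → ℝ} (hg : AEStronglyMeasurable g)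
    (hM : ∀ x, ‖x‖ < η → |g x| ≤ M) : Integrable (fun x => phiMol η x * g x) := by
  rw [phiMol_mul_eq_indicator, integrable_indicator_iff measurableSet_ball]
  refine Measure.integrableOn_of_bounded (M := |3 / (4 * π * η ^ 3)| * M)
    measure_ball_lt_top.ne (aestronglyMeasurable_const.mul hg) ?_
  filter_upwards [ae_restrict_mem measurableSet_ball] with x hx
  rw [norm_mul, Real.norm_eq_abs, Real.norm_eq_abs]
  exact mul_le_mul_of_nonneg_left (hM x (mem_ball_zero_iff.mp hx)) (abs_nonneg _)

lemma integral_phiMol_mul_clm (η : ℝ) (L : ℝ³ →L[ℝ] ℝ) : ∫ x, phiMol η x * L x = 0 := by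
  have h := integral_neg_eq_self (fun x => phiMol η x * L x) volume
  simp only [phiMol_neg, map_neg, mul_neg, integral_neg] at h
  linarith

lemma abs_integral_phiMol_mul_le_of_sub_clm {η M : ℝ} (hη : 0 < η) {g : ℝ³ → ℝ}
    (hg : AEStronglyMeasurable g) (L : ℝ³ →L[ℝ] ℝ) (hM : ∀ x, ‖x‖ < η → |g x - L x| ≤ M) :
    |∫ x, phiMol η x * g x| ≤ M := by
  have hL : Integrable (fun x => phiMol η x * L x) :=
    integrable_phiMol_mul L.continuous.aestronglyMeasurable (M := ‖L‖ * η) fun x hx =>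
      (L.le_opNorm x).trans (by gcongr)
  have hgL : Integrable (fun x => phiMol η x * (g x - L x)) :=
    integrable_phiMol_mul (hg.sub L.continuous.aestronglyMeasurable) hM
  have hsplit : ∫ x, phiMol η x * g x = ∫ x, phiMol η x * (g x - L x) := by
    rw [← add_zero (∫ x, phiMol η x * (g x - L x)), ← integral_phiMol_mul_clm η L,
      ← integral_add hgL hL]
    simp only [mul_sub, sub_add_cancel]
  rw [hsplit]
  exact abs_integral_phiMol_mul_le hη hM

lemma abs_sub_sub_deriv_le_of_abs_deriv2_le {F F' F'' : ℝ → ℝ} {M : ℝ}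
    (hF : ∀ t ∈ Icc (0 : ℝ) 1, HasDerivAt F (F' t) t)
    (hF' : ∀ t ∈ Icc (0 : ℝ) 1, HasDerivAt F' (F'' t) t)
    (hM : ∀ t ∈ Icc (0 : ℝ) 1, |F'' t| ≤ M) :
    |F 1 - F 0 - F' 0| ≤ M := by
  have hF'_sub : ∀ t ∈ Icc (0 : ℝ) 1, ‖F' t - F' 0‖ ≤ M * (t - 0) :=
    norm_image_sub_le_of_norm_deriv_le_segment' (fun t ht => (hF' t ht).hasDerivWithinAt)
      fun t ht => hM t (Ico_subset_Icc_self ht)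
  have hG : ∀ t ∈ Icc (0 : ℝ) 1,
      HasDerivWithinAt (fun s => F s - s * F' 0) (F' t - F' 0) (Icc 0 1) t := fun t ht =>
    ((hF t ht).sub (by simpa using (hasDerivAt_id t).mul_const (F' 0))).hasDerivWithinAt
  have := norm_image_sub_le_of_norm_deriv_le_segment' hG
    (fun t ht => (hF'_sub t (Ico_subset_Icc_self ht)).trans
      (by nlinarith [ht.1, ht.2, (abs_nonneg _).trans (hM 0 (by simp))])) 1 (by simp)
  simpa [Real.norm_eq_abs, sub_right_comm] using this

lemma abs_leibniz_le {g g' g'' p p' p'' a₀ a₁ a₂ b₀ b₁ b₂ : ℝ} (hg : |g| ≤ a₀)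
    (hg' : |g'| ≤ a₁) (hg'' : |g''| ≤ a₂) (hp : |p| ≤ b₀) (hp' : |p'| ≤ b₁)
    (hp'' : |p''| ≤ b₂) :
    |g'' * p + 2 * (g' * p') + g * p''| ≤ a₂ * b₀ + 2 * (a₁ * b₁) + a₀ * b₂ := by
  have h := abs_add_three (g'' * p) (2 * (g' * p')) (g * p'')
  rw [abs_mul, abs_mul, abs_mul, abs_mul, abs_two] at h
  refine h.trans (add_le_add (add_le_add ?_ ?_) ?_)
  · exact mul_le_mul hg'' hp (abs_nonneg _) ((abs_nonneg _).trans hg'')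
  · exact mul_le_mul_of_nonneg_left
      (mul_le_mul hg' hp' (abs_nonneg _) ((abs_nonneg _).trans hg')) zero_le_two
  · exact mul_le_mul hg hp'' (abs_nonneg _) ((abs_nonneg _).trans hg)

section Line

variable {F : Type*} [NormedAddCommGroup F] [InnerProductSpace ℝ F]

lemma hasDerivAt_add_smul (v y : F) (t : ℝ) : HasDerivAt (fun t : ℝ => v + t • y) y t := by
  simpa using ((hasDerivAt_id t).smul_const y).const_add v

lemma hasDerivAt_norm_add_smul_sq (v y : F) (t : ℝ) :
    HasDerivAt (fun t : ℝ => ‖v + t • y‖ ^ 2) (2 * inner ℝ (v + t • y) y) t :=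
  (hasDerivAt_add_smul v y t).norm_sq

lemma hasDerivAt_inner_add_smul (v y : F) (t : ℝ) :
    HasDerivAt (fun t : ℝ => inner ℝ (v + t • y) y) (‖y‖ ^ 2) t := by
  simpa [real_inner_self_eq_norm_sq] using
    (hasDerivAt_add_smul v y t).inner ℝ (hasDerivAt_const t y)

lemma hasDerivAt_rpow_norm_add_smul_sq (c : ℝ) {v y : F} {t : ℝ} (hw : v + t • y ≠ 0) :
    HasDerivAt (fun t : ℝ => (‖v + t • y‖ ^ 2) ^ c)
      (2 * inner ℝ (v + t • y) y * c * (‖v + t • y‖ ^ 2) ^ (c - 1)) t :=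
  (hasDerivAt_norm_add_smul_sq v y t).rpow_const (Or.inl (by positivity))

lemma hasDerivAt_deriv_rpow_norm_add_smul_sq (c : ℝ) {v y : F} {t : ℝ} (hw : v + t • y ≠ 0) :
    HasDerivAt (fun t : ℝ => 2 * inner ℝ (v + t • y) y * c * (‖v + t • y‖ ^ 2) ^ (c - 1))
      (2 * ‖y‖ ^ 2 * c * (‖v + t • y‖ ^ 2) ^ (c - 1)
        + 2 * inner ℝ (v + t • y) y * c
          * (2 * inner ℝ (v + t • y) y * (c - 1) * (‖v + t • y‖ ^ 2) ^ (c - 1 - 1))) t :=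
  (((hasDerivAt_inner_add_smul v y t).const_mul 2).mul_const c).mul
    (hasDerivAt_rpow_norm_add_smul_sq (c - 1) hw)

variable (v y : ℝ³) (t : ℝ) (i j : Fin 3)

lemma polarForm_add_smul_left :
    polarForm (v + t • y) y i j = polarForm v y i j + t * polarForm y y i j := by
  simp only [polarForm, Matrix.sub_apply, Matrix.smul_apply, of_apply, smul_eq_mul,
    inner_add_left, real_inner_smul_left, PiLp.add_apply, PiLp.smul_apply]
  ring

lemma polarForm_add_smul_add_smul :
    polarForm (v + t • y) (v + t • y) i j
      = polarForm v v i j + t * (2 * polarForm v y i j) + t ^ 2 * polarForm y y i j := by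
  simp only [polarForm, Matrix.sub_apply, Matrix.smul_apply, of_apply, smul_eq_mul,
    inner_add_left, inner_add_right, real_inner_smul_left, real_inner_smul_right,
    PiLp.add_apply, PiLp.smul_apply, real_inner_comm v y]
  ring

lemma hasDerivAt_polarForm_add_smul_left :
    HasDerivAt (fun t : ℝ => polarForm (v + t • y) y i j) (polarForm y y i j) t := by
  simp only [polarForm_add_smul_left]
  simpa using ((hasDerivAt_id' t).mul_const (polarForm y y i j)).const_add (polarForm v y i j)

lemma hasDerivAt_polarForm_add_smul :
    HasDerivAt (fun t : ℝ => polarForm (v + t • y) (v + t • y) i j)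
      (2 * polarForm (v + t • y) y i j) t := by
  simp only [polarForm_add_smul_add_smul, polarForm_add_smul_left]
  refine ((((hasDerivAt_id' t).mul_const _).const_add _).add
    ((hasDerivAt_pow 2 t).mul_const _)).congr_deriv ?_
  ring

end Line

lemma abs_mul_sub_mul_sub_deriv_le {g g' g'' p p' p'' : ℝ → ℝ} {M : ℝ}
    (hg : ∀ t ∈ Icc (0 : ℝ) 1, HasDerivAt g (g' t) t)
    (hg' : ∀ t ∈ Icc (0 : ℝ) 1, HasDerivAt g' (g'' t) t)
    (hp : ∀ t ∈ Icc (0 : ℝ) 1, HasDerivAt p (p' t) t)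
    (hp' : ∀ t ∈ Icc (0 : ℝ) 1, HasDerivAt p' (p'' t) t)
    (hM : ∀ t ∈ Icc (0 : ℝ) 1, |g'' t * p t + 2 * (g' t * p' t) + g t * p'' t| ≤ M) :
    |g 1 * p 1 - g 0 * p 0 - (g' 0 * p 0 + g 0 * p' 0)| ≤ M :=
  abs_sub_sub_deriv_le_of_abs_deriv2_le (F := fun t => g t * p t)
    (fun t ht => (hg t ht).mul (hp t ht))
    (fun t ht => (((hg' t ht).mul (hp t ht)).add ((hg t ht).mul (hp' t ht))).congr_deriv
      (by ring))
    hM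

-- The second derivative of `t ↦ (‖w + t y‖²)^c` at `t = 0`.
lemma abs_rpow_lineDeriv2_le {F : Type*} [NormedAddCommGroup F] [InnerProductSpace ℝ F]
    {c : ℝ} (hc : c ∈ Icc (-1 : ℝ) 0) {w : F} (hw : w ≠ 0) (y : F) :
    |2 * ‖y‖ ^ 2 * c * (‖w‖ ^ 2) ^ (c - 1)
        + 2 * inner ℝ w y * c * (2 * inner ℝ w y * (c - 1) * (‖w‖ ^ 2) ^ (c - 1 - 1))|
      ≤ 10 * (‖w‖ ^ 2) ^ (c - 1) * ‖y‖ ^ 2 := by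
  have hS : 0 < ‖w‖ ^ 2 := by positivity
  have hA : 0 < (‖w‖ ^ 2) ^ (c - 1) := Real.rpow_pos_of_pos hS _
  have hI : inner ℝ w y ^ 2 ≤ ‖w‖ ^ 2 * ‖y‖ ^ 2 := by
    rw [← mul_pow, ← sq_abs]
    exact pow_le_pow_left₀ (abs_nonneg _) (abs_real_inner_le_norm w y) 2
  have hIS : inner ℝ w y ^ 2 / ‖w‖ ^ 2 ≤ ‖y‖ ^ 2 := by rwa [div_le_iff₀' hS]
  have hcc : 0 ≤ c * (c - 1) ∧ c * (c - 1) ≤ 2 := by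
    constructor <;> nlinarith [hc.1, hc.2]
  rw [Real.rpow_sub_one hS.ne' (c - 1), abs_le]
  have hrw : 2 * inner ℝ w y * c * (2 * inner ℝ w y * (c - 1) * ((‖w‖ ^ 2) ^ (c - 1) / ‖w‖ ^ 2))
      = 4 * (c * (c - 1)) * (‖w‖ ^ 2) ^ (c - 1) * (inner ℝ w y ^ 2 / ‖w‖ ^ 2) := by ring
  rw [hrw]
  have h0 : 0 ≤ inner ℝ w y ^ 2 / ‖w‖ ^ 2 := by positivity
  constructor <;> nlinarith [mul_le_mul_of_nonneg_left hIS (mul_nonneg hcc.1 hA.le),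
    mul_le_mul_of_nonneg_left hIS hA.le, mul_nonneg hcc.1 hA.le, sq_nonneg ‖y‖,
    mul_nonneg (mul_nonneg hcc.1 hA.le) h0, hc.1, hc.2, mul_nonneg hA.le (sq_nonneg ‖y‖)]

-- The second derivative of `t ↦ a(w + t y)ᵢⱼ` at `t = 0`, with `c = γ / 2`.
lemma abs_aMat_lineDeriv2_le {c : ℝ} (hc : c ∈ Icc (-1 : ℝ) 0) {w : ℝ³} (hw : w ≠ 0)
    (y : ℝ³) (i j : Fin 3) :
    |(2 * ‖y‖ ^ 2 * c * (‖w‖ ^ 2) ^ (c - 1)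
          + 2 * inner ℝ w y * c * (2 * inner ℝ w y * (c - 1) * (‖w‖ ^ 2) ^ (c - 1 - 1)))
          * polarForm w w i j
        + 2 * (2 * inner ℝ w y * c * (‖w‖ ^ 2) ^ (c - 1) * (2 * polarForm w y i j))
        + (‖w‖ ^ 2) ^ c * (2 * polarForm y y i j)|
      ≤ 40 * ‖y‖ ^ 2 * (‖w‖ ^ 2) ^ c := by
  have hS : 0 < ‖w‖ ^ 2 := by positivity
  set A := (‖w‖ ^ 2) ^ (c - 1) with hA_def
  have hA : 0 < A := Real.rpow_pos_of_pos hS _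
  have hSc : (‖w‖ ^ 2) ^ c = A * ‖w‖ ^ 2 := by
    rw [hA_def, Real.rpow_sub_one hS.ne', div_mul_cancel₀ _ hS.ne']
  have habs_two_mul : ∀ {a b : ℝ}, |a| ≤ b → |2 * a| ≤ 2 * b := fun h => by
    rw [abs_mul, abs_two]; linarith
  have hg : |(‖w‖ ^ 2) ^ c| ≤ A * ‖w‖ ^ 2 := by
    rw [hSc, abs_of_pos (by positivity)]
  have hg' : |2 * inner ℝ w y * c * A| ≤ 2 * A * (‖w‖ * ‖y‖) := by
    have hc' : |c| ≤ 1 := abs_le.mpr ⟨hc.1, by linarith [hc.2]⟩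
    rw [abs_mul, abs_mul, abs_mul, abs_two, abs_of_pos hA]
    have := abs_real_inner_le_norm w y
    have := mul_le_mul this hc' (abs_nonneg _) (by positivity)
    nlinarith
  calc _ ≤ 10 * A * ‖y‖ ^ 2 * (2 * ‖w‖ * ‖w‖)
        + 2 * (2 * A * (‖w‖ * ‖y‖) * (2 * (2 * ‖w‖ * ‖y‖)))
        + A * ‖w‖ ^ 2 * (2 * (2 * ‖y‖ * ‖y‖)) :=
      abs_leibniz_le hg hg' (abs_rpow_lineDeriv2_le hc hw y) (abs_polarForm_apply_le w w i j)
        (habs_two_mul (abs_polarForm_apply_le w y i j))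
        (habs_two_mul (abs_polarForm_apply_le y y i j))
    _ = 40 * ‖y‖ ^ 2 * (‖w‖ ^ 2) ^ c := by rw [hSc]; ring

lemma differentiableAt_aMat_apply (γ : ℝ) {v : ℝ³} (hv : v ≠ 0) (i j : Fin 3) :
    DifferentiableAt ℝ (fun w => aMat γ w i j) v := by
  simp only [aMat_apply_eq]
  refine ((differentiableAt_id.norm_sq ℝ).rpow_const (Or.inl (by positivity))).mul ?_
  simp only [polarForm, Matrix.sub_apply, Matrix.smul_apply, of_apply, smul_eq_mul]
  exact ((differentiableAt_id.inner ℝ differentiableAt_id).mul_const _).sub (by fun_prop)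

theorem abs_aMat_add_sub_sub_fderiv_le {γ : ℝ} (hγ : γ ∈ Icc (-2 : ℝ) 0) {v y : ℝ³} {ρ : ℝ}
    (hρ : 0 < ρ) (hline : ∀ t ∈ Icc (0 : ℝ) 1, ρ ≤ ‖v + t • y‖) (i j : Fin 3) :
    |aMat γ (v + y) i j - aMat γ v i j - fderiv ℝ (fun w => aMat γ w i j) v y|
      ≤ 40 * ‖y‖ ^ 2 * ρ ^ γ := by
  have hc : γ / 2 ∈ Icc (-1 : ℝ) 0 := ⟨by linarith [hγ.1], by linarith [hγ.2]⟩
  have hw : ∀ t ∈ Icc (0 : ℝ) 1, v + t • y ≠ 0 := fun t ht =>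
    norm_pos_iff.mp (hρ.trans_le (hline t ht))
  have hg : ∀ t ∈ Icc (0 : ℝ) 1, HasDerivAt (fun t => (‖v + t • y‖ ^ 2) ^ (γ / 2))
      (2 * inner ℝ (v + t • y) y * (γ / 2) * (‖v + t • y‖ ^ 2) ^ (γ / 2 - 1)) t :=
    fun t ht => hasDerivAt_rpow_norm_add_smul_sq (γ / 2) (hw t ht)
  have hp : ∀ t ∈ Icc (0 : ℝ) 1, HasDerivAt (fun t => polarForm (v + t • y) (v + t • y) i j)
      (2 * polarForm (v + t • y) y i j) t := fun t _ => hasDerivAt_polarForm_add_smul v y t i j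
  have h0 : (0 : ℝ) ∈ Icc (0 : ℝ) 1 := ⟨le_rfl, zero_le_one⟩
  have hfderiv : HasDerivAt
      (fun t : ℝ => (‖v + t • y‖ ^ 2) ^ (γ / 2) * polarForm (v + t • y) (v + t • y) i j)
      (fderiv ℝ (fun w => aMat γ w i j) v y) 0 := by
    simp only [← aMat_apply_eq]
    exact (differentiableAt_aMat_apply γ (by simpa using hw 0 h0) i j).hasFDerivAt
      |>.comp_hasDerivAt_of_eq 0 (hasDerivAt_add_smul v y 0) (by simp)
  have htaylor := abs_mul_sub_mul_sub_deriv_le (M := 40 * ‖y‖ ^ 2 * ρ ^ γ) hg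
    (fun t ht => hasDerivAt_deriv_rpow_norm_add_smul_sq (γ / 2) (hw t ht)) hp
    (fun t _ => (hasDerivAt_polarForm_add_smul_left v y t i j).const_mul 2)
    (fun t ht => (abs_aMat_lineDeriv2_le hc (hw t ht) y i j).trans ?_)
  · convert htaylor using 3
    · simp only [one_smul, zero_smul, add_zero, aMat_apply_eq]
    · exact hfderiv.unique ((hg 0 h0).mul (hp 0 h0))
  · rw [sq_rpow_half (norm_nonneg _)]
    exact mul_le_mul_of_nonneg_left (Real.rpow_le_rpow_of_nonpos hρ (hline t ht) hγ.2)
      (by positivity)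

lemma measurable_aMat_apply (γ : ℝ) (i j : Fin 3) : Measurable fun w : ℝ³ => aMat γ w i j := by
  simp only [aMat, Matrix.smul_apply, Matrix.sub_apply, of_apply, smul_eq_mul]
  fun_prop

lemma aConv_apply_sub_aMat_apply {γ η : ℝ} (hγ : -2 ≤ γ) (hη : 0 < η) (v : ℝ³) (i j : Fin 3) :
    aConv γ η v i j - aMat γ v i j = ∫ x, phiMol η x * (aMat γ (v - x) i j - aMat γ v i j) := by
  have hint : Integrable fun x => phiMol η x * aMat γ (v - x) i j :=
    integrable_phiMol_mul (M := 2 * (‖v‖ + η) ^ (γ + 2))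
      ((measurable_aMat_apply γ i j).comp (measurable_const.sub measurable_id)).aestronglyMeasurable
      fun x hx => (abs_aMat_apply_le γ _ i j).trans <| by
        gcongr
        · linarith
        · exact (norm_sub_le v x).trans (by linarith)
  have hconst : Integrable fun x => phiMol η x * aMat γ v i j :=
    integrable_phiMol_mul aestronglyMeasurable_const fun _ _ => le_rfl
  simp only [mul_sub]
  rw [integral_sub hint hconst, integral_mul_const, integral_phiMol hη, one_mul]
  rfl

lemma rpow_le_nine_mul_rpow {γ ρ u : ℝ} (hγ : γ ∈ Icc (-2 : ℝ) 0) (hu : 0 < u)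
    (hρ : u ≤ 3 * ρ) : ρ ^ γ ≤ 9 * u ^ γ := by
  have h9 : (3 : ℝ) ^ (-γ) ≤ 9 := by
    calc (3 : ℝ) ^ (-γ) ≤ 3 ^ (2 : ℝ) :=
          Real.rpow_le_rpow_of_exponent_le (by norm_num) (by linarith [hγ.1])
      _ = 9 := by norm_num
  calc ρ ^ γ ≤ (u / 3) ^ γ := Real.rpow_le_rpow_of_nonpos (by positivity) (by linarith) hγ.2
    _ = 3 ^ (-γ) * u ^ γ := by
      rw [Real.div_rpow hu.le (by norm_num), Real.rpow_neg (by norm_num), div_eq_inv_mul]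
    _ ≤ 9 * u ^ γ := mul_le_mul_of_nonneg_right h9 (by positivity)

lemma abs_aMat_sub_sub_le_of_norm_le {γ η : ℝ} (hγ : -2 ≤ γ) {v x : ℝ³}
    (hv : ‖v‖ ≤ 2 * η) (hx : ‖x‖ < η) (i j : Fin 3) :
    |aMat γ (v - x) i j - aMat γ v i j| ≤ 36 * η ^ 2 * (η + ‖v‖) ^ γ := by
  have hu : 0 < η + ‖v‖ := by linarith [norm_nonneg x, norm_nonneg v]
  have hbound : ∀ w : ℝ³, ‖w‖ ≤ η + ‖v‖ → |aMat γ w i j| ≤ 2 * (η + ‖v‖) ^ (γ + 2) :=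
    fun w hw => (abs_aMat_apply_le γ w i j).trans <| by gcongr; linarith
  have h1 := hbound (v - x) ((norm_sub_le v x).trans (by linarith))
  have h2 := hbound v (by linarith)
  have hsplit : (η + ‖v‖) ^ (γ + 2) = (η + ‖v‖) ^ γ * (η + ‖v‖) ^ 2 := by
    rw [Real.rpow_add hu, Real.rpow_two]
  have hsq : (η + ‖v‖) ^ 2 ≤ 9 * η ^ 2 := by nlinarith [norm_nonneg v]
  have hpos := Real.rpow_pos_of_pos hu γ
  calc _ ≤ |aMat γ (v - x) i j| + |aMat γ v i j| := abs_sub _ _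
    _ ≤ 4 * ((η + ‖v‖) ^ γ * (η + ‖v‖) ^ 2) := by rw [← hsplit]; linarith
    _ ≤ 36 * η ^ 2 * (η + ‖v‖) ^ γ := by nlinarith

lemma abs_aMat_sub_sub_add_fderiv_le_of_lt_norm {γ η : ℝ} (hγ : γ ∈ Icc (-2 : ℝ) 0)
    {v x : ℝ³} (hv : 2 * η < ‖v‖) (hx : ‖x‖ < η) (i j : Fin 3) :
    |aMat γ (v - x) i j - aMat γ v i j + fderiv ℝ (fun w => aMat γ w i j) v x|
      ≤ 360 * η ^ 2 * (η + ‖v‖) ^ γ := by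
  have hρ : 0 < ‖v‖ - η := by linarith [norm_nonneg x]
  have hline : ∀ t ∈ Icc (0 : ℝ) 1, ‖v‖ - η ≤ ‖v + t • -x‖ := fun t ht => by
    have htx : ‖t • x‖ ≤ η := by
      rw [norm_smul, Real.norm_of_nonneg ht.1]
      nlinarith [ht.2, norm_nonneg x]
    rw [smul_neg, ← sub_eq_add_neg]
    linarith [norm_sub_norm_le v (t • x)]
  have h := abs_aMat_add_sub_sub_fderiv_le hγ hρ hline i j
  rw [← sub_eq_add_neg, map_neg, sub_neg_eq_add, norm_neg] at h
  calc _ ≤ 40 * ‖x‖ ^ 2 * (‖v‖ - η) ^ γ := h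
    _ ≤ 40 * η ^ 2 * (9 * (η + ‖v‖) ^ γ) := by
      gcongr
      exact rpow_le_nine_mul_rpow hγ (by linarith [norm_nonneg x]) (by linarith)
    _ = 360 * η ^ 2 * (η + ‖v‖) ^ γ := by ring

lemma abs_aConv_sub_aMat_apply_le {γ η : ℝ} (hγ : γ ∈ Icc (-2 : ℝ) 0) (hη : 0 < η) (v : ℝ³)
    (i j : Fin 3) : |aConv γ η v i j - aMat γ v i j| ≤ 360 * η ^ 2 * (η + ‖v‖) ^ γ := by
  obtain ⟨L, hL⟩ : ∃ L : ℝ³ →L[ℝ] ℝ, ∀ x : ℝ³, ‖x‖ < η →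
      |aMat γ (v - x) i j - aMat γ v i j - L x| ≤ 360 * η ^ 2 * (η + ‖v‖) ^ γ := by
    rcases le_or_gt ‖v‖ (2 * η) with hnear | hfar
    · refine ⟨0, fun x hx => ?_⟩
      have hpos := Real.rpow_pos_of_pos (by positivity : 0 < η + ‖v‖) γ
      simpa using (abs_aMat_sub_sub_le_of_norm_le hγ.1 hnear hx i j).trans (by nlinarith)
    · exact ⟨-fderiv ℝ (fun w => aMat γ w i j) v, fun x hx => by
        simpa using abs_aMat_sub_sub_add_fderiv_le_of_lt_norm hγ hfar hx i j⟩
  rw [aConv_apply_sub_aMat_apply hγ.1 hη]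
  exact abs_integral_phiMol_mul_le_of_sub_clm hη
    (((measurable_aMat_apply γ i j).comp (measurable_const.sub measurable_id)).sub
      measurable_const).aestronglyMeasurable L hL

/-- for `γ ∈ (-2,0)` there is `C > 0` (depending only on `γ`) such that for
all `η ∈ (0,1)` and all `v ∈ ℝ³`, `‖(a ⋆ φ_η)(v) − a(v)‖ ≤ C η² (η + |v|)^γ`. -/
theorem statement4 (γ : ℝ) (hγ : γ ∈ Set.Ioo (-2 : ℝ) 0) :
    ∃ C : ℝ, 0 < C ∧ ∀ η ∈ Set.Ioo (0 : ℝ) 1, ∀ v : EuclideanSpace ℝ (Fin 3),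
      frob (aConv γ η v - aMat γ v) ≤ C * η ^ 2 * (η + ‖v‖) ^ γ := by
  refine ⟨1080, by norm_num, fun η hη v => ?_⟩
  calc frob (aConv γ η v - aMat γ v) ≤ 3 * (360 * η ^ 2 * (η + ‖v‖) ^ γ) :=
        frob_le_of_abs_apply_le fun i j =>
          abs_aConv_sub_aMat_apply_le (Ioo_subset_Icc_self hγ) hη.1 v i j
    _ = 1080 * η ^ 2 * (η + ‖v‖) ^ γ := by ring
end
end

section
/- Let m be a probability measure on a measurable space F, and let σ₁, σ₂ : F → M₃(ℝ) be measurable families of 3×3 matrices with Σᵢ := ∫_F σᵢ(x) σᵢ(x)* m(dx) well-defined, symmetric positive definite. Define U(Σ₁, Σ₂) := Σ₂^{-1/2} Σ₁^{-1/2} (Σ₁^{1/2} Σ₂ Σ₁^{1/2})^{1/2}. Then ‖Σ₁^{1/2} − Σ₂^{1/2} U(Σ₁, Σ₂)‖² ≤ ∫_F ‖σ₁(x) − σ₂(x)‖² m(dx), where ‖·‖ is the Frobenius norm. -/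
/-!
Both sides expand as `tr Σ₁ + tr Σ₂ - 2 t`: on the left `t = tr R`, since `S₂ U = S₁⁻¹ R`; on the
right `t = tr M` with `M = ∫ σ₁ σ₂ᵀ dm`. So everything reduces to the Givens–Shortt inequality
`tr M ≤ tr R`. Cauchy–Schwarz in `L²(m)` gives `(uᵀ M v)² ≤ (uᵀ Σ₁ u) (vᵀ Σ₂ v)`, i.e.
`C = S₁⁻¹ M S₂⁻¹` is a contraction. Since `R² = (S₂ S₁)ᵀ (S₂ S₁)`, the matrix `W = S₂ S₁ R⁻¹` is
orthogonal, and `tr M = tr (S₁ C S₂) = tr (C W R) = tr (R (C W))` with `C W` again a contraction.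
Finally `tr (R X) ≤ tr R` for `R ⪰ 0` and every contraction `X`: write `R = Bᵀ B` and compare
`tr (B X Bᵀ) = ∑ᵢ bᵢ ⬝ X bᵢ` with `∑ᵢ bᵢ ⬝ bᵢ` over the rows `bᵢ` of `B`.
-/

open Matrix MeasureTheory

noncomputable section

namespace Matrix

variable {n : Type*} [Fintype n]

theorem trace_sub_mul_transpose_sub {m R : Type*} [Fintype m] [CommRing R] (A B : Matrix m n R) :
    trace ((A - B) * (A - B)ᵀ) = trace (A * Aᵀ) + trace (B * Bᵀ) - 2 * trace (A * Bᵀ) := by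
  have hBA : trace (B * Aᵀ) = trace (A * Bᵀ) := by
    rw [← trace_transpose, transpose_mul, transpose_transpose]
  rw [transpose_sub, Matrix.sub_mul, Matrix.mul_sub, Matrix.mul_sub, trace_sub, trace_sub,
    trace_sub, hBA]
  ring

theorem dotProduct_mul_transpose_mulVec {k : Type*} [Fintype k] (A B : Matrix n k ℝ)
    (u v : n → ℝ) : u ⬝ᵥ (A * Bᵀ) *ᵥ v = (u ᵥ* A) ⬝ᵥ (v ᵥ* B) := by
  rw [← mulVec_mulVec, dotProduct_mulVec, mulVec_transpose]

theorem dotProduct_self_nonneg (u : n → ℝ) : 0 ≤ u ⬝ᵥ u := by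
  simpa using dotProduct_star_self_nonneg u

theorem mul_mul_transpose_apply_self {m : Type*} (B : Matrix m n ℝ) (X : Matrix n n ℝ) (i : m) :
    (B * X * Bᵀ) i i = B i ⬝ᵥ X *ᵥ B i := by
  rw [mul_apply, dotProduct_mulVec]
  rfl

theorem trace_mul_le_trace_of_dotProduct_mulVec_le [DecidableEq n] {R X : Matrix n n ℝ}
    (hR : R.PosSemidef) (hX : ∀ u, u ⬝ᵥ X *ᵥ u ≤ u ⬝ᵥ u) :
    trace (R * X) ≤ trace R := by
  open scoped MatrixOrder in
  obtain ⟨B, rfl⟩ := CStarAlgebra.nonneg_iff_eq_star_mul_self.mp hR.nonneg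
  rw [star_eq_conjTranspose, conjTranspose_eq_transpose_of_trivial, Matrix.mul_assoc,
    trace_mul_comm, trace_mul_comm Bᵀ]
  calc trace (B * X * Bᵀ) = ∑ i, B i ⬝ᵥ X *ᵥ B i := by
        simp only [trace, diag_apply, mul_mul_transpose_apply_self]
    _ ≤ ∑ i, B i ⬝ᵥ B i := Finset.sum_le_sum fun i _ => hX (B i)
    _ = trace (B * Bᵀ) := by
        simp only [trace, diag_apply, mul_apply, transpose_apply, dotProduct]

theorem dotProduct_mul_mulVec_le_of_sq_le [DecidableEq n] {C W : Matrix n n ℝ}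
    (hC : ∀ u v, (u ⬝ᵥ C *ᵥ v) ^ 2 ≤ (u ⬝ᵥ u) * (v ⬝ᵥ v)) (hW : Wᵀ * W = 1) (u : n → ℝ) :
    u ⬝ᵥ (C * W) *ᵥ u ≤ u ⬝ᵥ u := by
  have hWu : (W *ᵥ u) ⬝ᵥ (W *ᵥ u) = u ⬝ᵥ u := by
    rw [dotProduct_mulVec, vecMul_mulVec, hW, vecMul_one]
  have h := hC u (W *ᵥ u)
  rw [hWu, ← sq] at h
  rw [← mulVec_mulVec]
  exact (abs_le_of_sq_le_sq' h (dotProduct_self_nonneg u)).2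

theorem inv_mulVec_dotProduct_mul_self_mulVec [DecidableEq n] {S : Matrix n n ℝ}
    (hS : S.IsSymm) (hSu : IsUnit S.det) (u : n → ℝ) :
    (S⁻¹ *ᵥ u) ⬝ᵥ (S * S) *ᵥ (S⁻¹ *ᵥ u) = u ⬝ᵥ u := by
  rw [← mulVec_mulVec, dotProduct_mulVec, ← mulVec_transpose, hS.eq, mulVec_mulVec,
    mul_nonsing_inv _ hSu, one_mulVec]

theorem trace_le_of_sq_dotProduct_mulVec_le [DecidableEq n] {S₁ S₂ R M : Matrix n n ℝ}
    (hS₁ : S₁.IsSymm) (hS₂ : S₂.IsSymm) (hS₁u : IsUnit S₁.det) (hS₂u : IsUnit S₂.det)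
    (hR : R.PosSemidef) (hRsq : R * R = S₁ * (S₂ * S₂) * S₁)
    (hM : ∀ u v, (u ⬝ᵥ M *ᵥ v) ^ 2 ≤ (u ⬝ᵥ (S₁ * S₁) *ᵥ u) * (v ⬝ᵥ (S₂ * S₂) *ᵥ v)) :
    trace M ≤ trace R := by
  have hRu : IsUnit R.det := isUnit_of_mul_isUnit_left (y := R.det) <| by
    rw [← det_mul, hRsq, det_mul, det_mul, det_mul]
    exact (hS₁u.mul (hS₂u.mul hS₂u)).mul hS₁u
  have hRs : R.IsSymm := isHermitian_iff_isSymm.mp hR.isHermitian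
  set C := S₁⁻¹ * M * S₂⁻¹ with hC_def
  set W := S₂ * S₁ * R⁻¹ with hW_def
  have hC : ∀ u v, (u ⬝ᵥ C *ᵥ v) ^ 2 ≤ (u ⬝ᵥ u) * (v ⬝ᵥ v) := by
    intro u v
    have hCuv : u ⬝ᵥ C *ᵥ v = (S₁⁻¹ *ᵥ u) ⬝ᵥ M *ᵥ (S₂⁻¹ *ᵥ v) := by
      rw [hC_def, ← mulVec_mulVec, ← mulVec_mulVec, dotProduct_mulVec, ← mulVec_transpose,
        transpose_nonsing_inv, hS₁.eq]
    rw [hCuv, ← inv_mulVec_dotProduct_mul_self_mulVec hS₁ hS₁u u,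
      ← inv_mulVec_dotProduct_mul_self_mulVec hS₂ hS₂u v]
    exact hM _ _
  have hW : Wᵀ * W = 1 := by
    calc Wᵀ * W = R⁻¹ * (S₁ * (S₂ * S₂) * S₁) * R⁻¹ := by
          simp only [W, transpose_mul, transpose_nonsing_inv, hRs.eq, hS₁.eq, hS₂.eq,
            Matrix.mul_assoc]
      _ = 1 := by rw [← hRsq, ← Matrix.mul_assoc, nonsing_inv_mul _ hRu, Matrix.one_mul,
            mul_nonsing_inv _ hRu]
  have hWR : W * R = S₂ * S₁ := by
    rw [hW_def, nonsing_inv_mul_cancel_right _ _ hRu]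
  have htrace : trace M = trace (R * (C * W)) := by
    calc trace M = trace (S₁ * C * S₂) := by
          rw [hC_def, ← Matrix.mul_assoc, mul_nonsing_inv_cancel_left _ _ hS₁u,
            nonsing_inv_mul_cancel_right _ _ hS₂u]
      _ = trace (C * (W * R)) := by
          rw [Matrix.mul_assoc, trace_mul_comm, Matrix.mul_assoc, hWR]
      _ = trace (R * (C * W)) := by rw [← Matrix.mul_assoc, trace_mul_comm]
  exact htrace ▸ trace_mul_le_trace_of_dotProduct_mulVec_le hR
    (dotProduct_mul_mulVec_le_of_sq_le hC hW)

theorem trace_sub_inv_mul_mul_transpose_sub [DecidableEq n] {S₁ S₂ R : Matrix n n ℝ}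
    (hS₁ : S₁.IsSymm) (hS₁u : IsUnit S₁.det) (hR : R.IsSymm)
    (hRsq : R * R = S₁ * (S₂ * S₂) * S₁) :
    trace ((S₁ - S₁⁻¹ * R) * (S₁ - S₁⁻¹ * R)ᵀ)
      = trace (S₁ * S₁) + trace (S₂ * S₂) - 2 * trace R := by
  have hT : (S₁⁻¹ * R)ᵀ = R * S₁⁻¹ := by
    rw [transpose_mul, transpose_nonsing_inv, hS₁.eq, hR.eq]
  have hsq : S₁⁻¹ * R * (R * S₁⁻¹) = S₂ * S₂ := by
    rw [Matrix.mul_assoc, ← Matrix.mul_assoc R, hRsq, mul_nonsing_inv_cancel_right _ _ hS₁u,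
      nonsing_inv_mul_cancel_left _ _ hS₁u]
  have hcross : trace (S₁ * (R * S₁⁻¹)) = trace R := by
    rw [← Matrix.mul_assoc, trace_mul_comm, nonsing_inv_mul_cancel_left _ _ hS₁u]
  rw [trace_sub_mul_transpose_sub, hS₁.eq, hT, hsq, hcross]

end Matrix

theorem frob_sq (A : Matrix (Fin 3) (Fin 3) ℝ) : frob A ^ 2 = trace (A * Aᵀ) :=
  Real.sq_sqrt <| by simpa using (posSemidef_self_mul_conjTranspose A).trace_nonneg

theorem integrable_mul_transpose_apply {F n k l : Type*} [MeasurableSpace F] {m : Measure F}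
    [Fintype k] {σ : F → Matrix n k ℝ} {τ : F → Matrix l k ℝ}
    (hσ : ∀ i j, MemLp (fun x => σ x i j) 2 m)
    (hτ : ∀ i j, MemLp (fun x => τ x i j) 2 m) (i : n) (j : l) :
    Integrable (fun x => (σ x * (τ x)ᵀ) i j) m := by
  simp only [mul_apply, transpose_apply]
  exact integrable_finsetSum _ fun p _ => (hσ i p).integrable_mul (hτ j p)

section Moments

variable {F : Type*} [MeasurableSpace F] {m : Measure F} {n k : Type*} [Fintype n] [Fintype k]

theorem integrable_dotProduct_mulVec {A : F → Matrix n k ℝ}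
    (hA : ∀ i j, Integrable (fun x => A x i j) m) (u : n → ℝ) (v : k → ℝ) :
    Integrable (fun x => u ⬝ᵥ A x *ᵥ v) m := by
  simp only [dotProduct, mulVec, Finset.mul_sum]
  exact integrable_finsetSum _ fun i _ => integrable_finsetSum _ fun j _ =>
    ((hA i j).mul_const _).const_mul _

theorem integral_dotProduct_mulVec {A : F → Matrix n k ℝ}
    (hA : ∀ i j, Integrable (fun x => A x i j) m) (u : n → ℝ) (v : k → ℝ) :
    ∫ x, u ⬝ᵥ A x *ᵥ v ∂m = u ⬝ᵥ (of fun i j => ∫ x, A x i j ∂m) *ᵥ v := by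
  simp only [dotProduct, mulVec, Finset.mul_sum, of_apply]
  rw [integral_finsetSum _ fun i _ => integrable_finsetSum _ fun j _ =>
    ((hA i j).mul_const _).const_mul _]
  refine Finset.sum_congr rfl fun i _ => ?_
  rw [integral_finsetSum _ fun j _ => ((hA i j).mul_const _).const_mul _]
  simp only [integral_const_mul, integral_mul_const]

theorem integrable_trace {A : F → Matrix n n ℝ} (hA : ∀ i j, Integrable (fun x => A x i j) m) :
    Integrable (fun x => trace (A x)) m :=
  integrable_finsetSum _ fun i _ => hA i i

theorem integral_trace {A : F → Matrix n n ℝ} (hA : ∀ i j, Integrable (fun x => A x i j) m) :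
    ∫ x, trace (A x) ∂m = trace (of fun i j => ∫ x, A x i j ∂m) :=
  integral_finsetSum _ fun i _ => hA i i

def crossMoment (m : Measure F) (σ τ : F → Matrix n k ℝ) : Matrix n n ℝ :=
  of fun i j => ∫ x, (σ x * (τ x)ᵀ) i j ∂m

variable {σ τ : F → Matrix n k ℝ}

theorem integrable_vecMul_dotProduct_vecMul (hσ : ∀ i j, MemLp (fun x => σ x i j) 2 m)
    (hτ : ∀ i j, MemLp (fun x => τ x i j) 2 m) (u v : n → ℝ) :
    Integrable (fun x => (u ᵥ* σ x) ⬝ᵥ (v ᵥ* τ x)) m := by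
  simp only [← dotProduct_mul_transpose_mulVec]
  exact integrable_dotProduct_mulVec (integrable_mul_transpose_apply hσ hτ) u v

theorem dotProduct_crossMoment_mulVec (hσ : ∀ i j, MemLp (fun x => σ x i j) 2 m)
    (hτ : ∀ i j, MemLp (fun x => τ x i j) 2 m) (u v : n → ℝ) :
    u ⬝ᵥ crossMoment m σ τ *ᵥ v = ∫ x, (u ᵥ* σ x) ⬝ᵥ (v ᵥ* τ x) ∂m := by
  simp only [← dotProduct_mul_transpose_mulVec]
  exact (integral_dotProduct_mulVec (integrable_mul_transpose_apply hσ hτ) u v).symm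

theorem crossMoment_quadratic_nonneg (hσ : ∀ i j, MemLp (fun x => σ x i j) 2 m)
    (hτ : ∀ i j, MemLp (fun x => τ x i j) 2 m) (u v : n → ℝ) :
    0 ≤ u ⬝ᵥ crossMoment m σ σ *ᵥ u + 2 * (u ⬝ᵥ crossMoment m σ τ *ᵥ v)
      + v ⬝ᵥ crossMoment m τ τ *ᵥ v := by
  rw [dotProduct_crossMoment_mulVec hσ hσ, dotProduct_crossMoment_mulVec hσ hτ,
    dotProduct_crossMoment_mulVec hτ hτ, ← integral_const_mul,
    ← integral_add (integrable_vecMul_dotProduct_vecMul hσ hσ u u)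
      ((integrable_vecMul_dotProduct_vecMul hσ hτ u v).const_mul 2),
    ← integral_add _ (integrable_vecMul_dotProduct_vecMul hτ hτ v v)]
  · refine integral_nonneg fun x => ?_
    have h := dotProduct_self_nonneg (u ᵥ* σ x + v ᵥ* τ x)
    rw [add_dotProduct, dotProduct_add, dotProduct_add, dotProduct_comm (v ᵥ* τ x)] at h
    simp only [Pi.zero_apply]
    linarith
  · exact (integrable_vecMul_dotProduct_vecMul hσ hσ u u).add
      ((integrable_vecMul_dotProduct_vecMul hσ hτ u v).const_mul 2)

theorem sq_dotProduct_crossMoment_mulVec_le (hσ : ∀ i j, MemLp (fun x => σ x i j) 2 m)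
    (hτ : ∀ i j, MemLp (fun x => τ x i j) 2 m) (u v : n → ℝ) :
    (u ⬝ᵥ crossMoment m σ τ *ᵥ v) ^ 2
      ≤ (u ⬝ᵥ crossMoment m σ σ *ᵥ u) * (v ⬝ᵥ crossMoment m τ τ *ᵥ v) := by
  have h : discrim (u ⬝ᵥ crossMoment m σ σ *ᵥ u) (2 * (u ⬝ᵥ crossMoment m σ τ *ᵥ v))
      (v ⬝ᵥ crossMoment m τ τ *ᵥ v) ≤ 0 := discrim_le_zero fun t => by
    have h := crossMoment_quadratic_nonneg hσ hτ (t • u) v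
    simp only [smul_dotProduct, mulVec_smul, dotProduct_smul, smul_eq_mul] at h
    linear_combination h
  rw [discrim] at h
  linarith

theorem integral_trace_mul_transpose (hσ : ∀ i j, MemLp (fun x => σ x i j) 2 m)
    (hτ : ∀ i j, MemLp (fun x => τ x i j) 2 m) :
    ∫ x, trace (σ x * (τ x)ᵀ) ∂m = trace (crossMoment m σ τ) :=
  integral_trace (integrable_mul_transpose_apply hσ hτ)

theorem integrable_trace_mul_transpose (hσ : ∀ i j, MemLp (fun x => σ x i j) 2 m)
    (hτ : ∀ i j, MemLp (fun x => τ x i j) 2 m) :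
    Integrable (fun x => trace (σ x * (τ x)ᵀ)) m :=
  integrable_trace (integrable_mul_transpose_apply hσ hτ)

theorem integral_trace_sub_mul_transpose_sub (hσ : ∀ i j, MemLp (fun x => σ x i j) 2 m)
    (hτ : ∀ i j, MemLp (fun x => τ x i j) 2 m) :
    ∫ x, trace ((σ x - τ x) * (σ x - τ x)ᵀ) ∂m
      = trace (crossMoment m σ σ) + trace (crossMoment m τ τ)
        - 2 * trace (crossMoment m σ τ) := by
  simp only [trace_sub_mul_transpose_sub]
  rw [integral_sub _ ((integrable_trace_mul_transpose hσ hτ).const_mul 2),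
    integral_add (integrable_trace_mul_transpose hσ hσ) (integrable_trace_mul_transpose hτ hτ),
    integral_const_mul, integral_trace_mul_transpose hσ hσ, integral_trace_mul_transpose hτ hτ,
    integral_trace_mul_transpose hσ hτ]
  exact (integrable_trace_mul_transpose hσ hσ).add (integrable_trace_mul_transpose hτ hτ)

end Moments

theorem statement6_general {F : Type*} [MeasurableSpace F] (m : Measure F)
    (σ₁ σ₂ : F → Matrix (Fin 3) (Fin 3) ℝ)
    (hL2₁ : ∀ i j, MemLp (fun x => σ₁ x i j) 2 m)
    (hL2₂ : ∀ i j, MemLp (fun x => σ₂ x i j) 2 m)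
    (Sig₁ Sig₂ : Matrix (Fin 3) (Fin 3) ℝ)
    (hSig₁ : ∀ i j, Sig₁ i j = ∫ x, (σ₁ x * (σ₁ x)ᵀ) i j ∂m)
    (hSig₂ : ∀ i j, Sig₂ i j = ∫ x, (σ₂ x * (σ₂ x)ᵀ) i j ∂m)
    (hpd₁ : Sig₁.PosDef) (hpd₂ : Sig₂.PosDef)
    (S₁ S₂ R : Matrix (Fin 3) (Fin 3) ℝ)
    (hS₁ : S₁.PosSemidef) (hS₁sq : S₁ * S₁ = Sig₁)
    (hS₂ : S₂.PosSemidef) (hS₂sq : S₂ * S₂ = Sig₂)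
    (hR : R.PosSemidef) (hRsq : R * R = S₁ * Sig₂ * S₁) :
    frob (S₁ - S₂ * (S₂⁻¹ * S₁⁻¹ * R)) ^ 2 ≤ ∫ x, frob (σ₁ x - σ₂ x) ^ 2 ∂m := by
  subst hS₁sq hS₂sq
  have hmom₁ : S₁ * S₁ = crossMoment m σ₁ σ₁ := Matrix.ext hSig₁
  have hmom₂ : S₂ * S₂ = crossMoment m σ₂ σ₂ := Matrix.ext hSig₂
  have hS₁s : S₁.IsSymm := isHermitian_iff_isSymm.mp hS₁.isHermitian
  have hS₂s : S₂.IsSymm := isHermitian_iff_isSymm.mp hS₂.isHermitian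
  have hS₁u : IsUnit S₁.det :=
    (isUnit_iff_isUnit_det S₁).mp (isUnit_of_mul_isUnit_left hpd₁.isUnit)
  have hS₂u : IsUnit S₂.det :=
    (isUnit_iff_isUnit_det S₂).mp (isUnit_of_mul_isUnit_left hpd₂.isUnit)
  have hGivensShortt : trace (crossMoment m σ₁ σ₂) ≤ trace R :=
    trace_le_of_sq_dotProduct_mulVec_le hS₁s hS₂s hS₁u hS₂u hR hRsq
      (hmom₁ ▸ hmom₂ ▸ sq_dotProduct_crossMoment_mulVec_le hL2₁ hL2₂)
  have hU : S₂ * (S₂⁻¹ * S₁⁻¹ * R) = S₁⁻¹ * R := by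
    rw [← Matrix.mul_assoc, ← Matrix.mul_assoc, mul_nonsing_inv _ hS₂u, Matrix.one_mul]
  simp only [frob_sq]
  rw [hU, trace_sub_inv_mul_mul_transpose_sub hS₁s hS₁u
      (isHermitian_iff_isSymm.mp hR.isHermitian) hRsq,
    integral_trace_sub_mul_transpose_sub hL2₁ hL2₂, ← hmom₁, ← hmom₂]
  linarith

/-- Let `m` be a probability measure on `F` and `σ₁, σ₂ : F → M₃(ℝ)`
measurable families of matrices (entrywise measurable and square integrable), with
`Σᵢ = ∫ σᵢ σᵢ* dm` symmetric positive definite.  Let `S₁, S₂` be the (nonnegative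
symmetric) square roots of `Σ₁, Σ₂` and `R` the square root of `S₁ Σ₂ S₁`, so that
`U(Σ₁,Σ₂) = S₂⁻¹ S₁⁻¹ R`.  Then
`‖Σ₁^{1/2} − Σ₂^{1/2} U(Σ₁,Σ₂)‖² ≤ ∫ ‖σ₁(x) − σ₂(x)‖² m(dx)` (Frobenius norms). -/
theorem statement6 {F : Type*} [MeasurableSpace F] (m : Measure F)
    [IsProbabilityMeasure m]
    (σ₁ σ₂ : F → Matrix (Fin 3) (Fin 3) ℝ)
    (hmeas₁ : ∀ i j, Measurable fun x => σ₁ x i j)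
    (hmeas₂ : ∀ i j, Measurable fun x => σ₂ x i j)
    (hL2₁ : ∀ i j, MemLp (fun x => σ₁ x i j) 2 m)
    (hL2₂ : ∀ i j, MemLp (fun x => σ₂ x i j) 2 m)
    (Sig₁ Sig₂ : Matrix (Fin 3) (Fin 3) ℝ)
    (hSig₁ : ∀ i j, Sig₁ i j = ∫ x, (σ₁ x * (σ₁ x)ᵀ) i j ∂m)
    (hSig₂ : ∀ i j, Sig₂ i j = ∫ x, (σ₂ x * (σ₂ x)ᵀ) i j ∂m)
    (hpd₁ : Sig₁.PosDef) (hpd₂ : Sig₂.PosDef)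
    (S₁ S₂ R : Matrix (Fin 3) (Fin 3) ℝ)
    (hS₁ : S₁.PosSemidef) (hS₁sq : S₁ * S₁ = Sig₁)
    (hS₂ : S₂.PosSemidef) (hS₂sq : S₂ * S₂ = Sig₂)
    (hR : R.PosSemidef) (hRsq : R * R = S₁ * Sig₂ * S₁) :
    frob (S₁ - S₂ * (S₂⁻¹ * S₁⁻¹ * R)) ^ 2 ≤ ∫ x, frob (σ₁ x - σ₂ x) ^ 2 ∂m :=
  statement6_general m σ₁ σ₂ hL2₁ hL2₂ Sig₁ Sig₂ hSig₁ hSig₂ hpd₁ hpd₂ S₁ S₂ R hS₁ hS₁sq hS₂ hS₂sq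
    hR hRsq
end
end

section
/- There is a constant C > 0 such that for every probability measure f on ℝ³ with density, finite second moment m₂(f), finite entropy H(f) = ∫ f log f, and every measurable set A ⊂ ℝ³ with Lebesgue measure |A| < 1, one has f(A) ≤ (C + H(f) + m₂(f)) / (−log |A|). In particular, if |A| ≤ exp(−4(C + H(f) + m₂(f))) then f(A) ≤ 1/4. -/
/-!
Gibbs' inequality `∫ f log g ≤ ∫ f log f + ∫ g - ∫ f` (for `g > 0`) is applied twice: on `A`
with the constant `g = 1 / |A|`, and on `Aᶜ` with the Gaussian `g = exp (-‖x‖²)`, whose integral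
is `π ^ (3 / 2)`. Adding the two bounds and using `∫ f = 1` gives
`f(A) · (-log |A|) ≤ H(f) + m₂(f) + π ^ (3 / 2)`, so `C = π ^ (3 / 2)` works.
-/

open MeasureTheory Real

theorem mul_log_le_mul_log_add {t b : ℝ} (ht : 0 ≤ t) (hb : 0 < b) :
    t * log b ≤ t * log t + (b - t) := by
  rcases ht.eq_or_lt with rfl | ht
  · simpa using hb.le
  have h := mul_le_mul_of_nonneg_left (log_le_sub_one_of_pos (div_pos hb ht)) ht.le
  rw [log_div hb.ne' ht.ne', mul_sub, mul_sub, mul_div_cancel₀ _ ht.ne'] at h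
  linarith

section Gibbs

variable {α : Type*} [MeasurableSpace α] {μ : Measure α} {f g : α → ℝ}

theorem integral_mul_log_le_integral_mul_log_add (hf : ∀ x, 0 ≤ f x) (hg : ∀ x, 0 < g x)
    (hfi : Integrable f μ) (hgi : Integrable g μ)
    (hfg : Integrable (fun x ↦ f x * log (g x)) μ)
    (hff : Integrable (fun x ↦ f x * log (f x)) μ) :
    ∫ x, f x * log (g x) ∂μ ≤ ∫ x, f x * log (f x) ∂μ + (∫ x, g x ∂μ - ∫ x, f x ∂μ) := by
  have hgf : Integrable (fun x ↦ g x - f x) μ := hgi.sub hfi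
  rw [← integral_sub hgi hfi, ← integral_add hff hgf]
  exact integral_mono hfg (hff.add hgf) fun x ↦ mul_log_le_mul_log_add (hf x) (hg x)

theorem setIntegral_mul_neg_log_measureReal_le {s : Set α} (hs : 0 < μ.real s)
    (hf : ∀ x, 0 ≤ f x) (hfi : Integrable f μ)
    (hff : Integrable (fun x ↦ f x * log (f x)) μ) :
    (∫ x in s, f x ∂μ) * -log (μ.real s) ≤
      ∫ x in s, f x * log (f x) ∂μ + (1 - ∫ x in s, f x ∂μ) := by
  have hgi : IntegrableOn (fun _ ↦ (μ.real s)⁻¹) s μ :=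
    integrableOn_const (ENNReal.toReal_pos_iff.1 hs).2.ne
  have h := integral_mul_log_le_integral_mul_log_add (μ := μ.restrict s) hf
    (fun _ ↦ inv_pos.2 hs) hfi.integrableOn hgi (hfi.integrableOn.mul_const _) hff.integrableOn
  rwa [integral_mul_const, setIntegral_const, smul_eq_mul, mul_inv_cancel₀ hs.ne', log_inv] at h

end Gibbs

section InnerProductSpace

variable {E : Type*} [NormedAddCommGroup E] [InnerProductSpace ℝ E] [FiniteDimensional ℝ E]
  [MeasurableSpace E] [BorelSpace E]

theorem integral_exp_neg_sq_norm :
    ∫ x : E, rexp (-‖x‖ ^ 2) = π ^ (Module.finrank ℝ E / 2 : ℝ) := by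
  simpa using GaussianFourier.integral_rexp_neg_mul_sq_norm (V := E) one_pos

theorem integrable_exp_neg_sq_norm : Integrable fun x : E ↦ rexp (-‖x‖ ^ 2) :=
  .of_integral_ne_zero <| by rw [integral_exp_neg_sq_norm]; positivity

theorem neg_setIntegral_sq_norm_mul_le {f : E → ℝ} (s : Set E) (hf : ∀ x, 0 ≤ f x)
    (hfi : Integrable f) (hff : Integrable fun x ↦ f x * log (f x))
    (hmom : Integrable fun x ↦ ‖x‖ ^ 2 * f x) :
    -∫ x in s, ‖x‖ ^ 2 * f x ≤
      (∫ x in s, f x * log (f x)) + (π ^ (Module.finrank ℝ E / 2 : ℝ) - ∫ x in s, f x) := by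
  have h := integral_mul_log_le_integral_mul_log_add (μ := volume.restrict s) hf
    (fun _ ↦ exp_pos _) hfi.integrableOn integrable_exp_neg_sq_norm.integrableOn
    (hmom.neg.integrableOn.congr (.of_forall fun x ↦ by simp [mul_comm])) hff.integrableOn
  have hgauss : ∫ x in s, rexp (-‖x‖ ^ 2) ≤ π ^ (Module.finrank ℝ E / 2 : ℝ) :=
    integral_exp_neg_sq_norm (E := E) ▸ setIntegral_le_integral integrable_exp_neg_sq_norm
      (.of_forall fun _ ↦ (exp_pos _).le)
  simp_rw [log_exp, mul_neg, integral_neg, mul_comm (f _) (‖_‖ ^ 2)] at h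
  linarith

theorem setIntegral_mul_neg_log_volume_le {f : E → ℝ} {A : Set E} (hA : MeasurableSet A)
    (hvol : 0 < volume.real A) (hf : ∀ x, 0 ≤ f x) (hfi : Integrable f) (hf1 : ∫ x, f x = 1)
    (hff : Integrable fun x ↦ f x * log (f x)) (hmom : Integrable fun x ↦ ‖x‖ ^ 2 * f x) :
    (∫ x in A, f x) * -log (volume.real A) ≤
      (∫ x, f x * log (f x)) + (∫ x, ‖x‖ ^ 2 * f x) + π ^ (Module.finrank ℝ E / 2 : ℝ) := by
  have hA_bound := setIntegral_mul_neg_log_measureReal_le hvol hf hfi hff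
  have hAc_bound := neg_setIntegral_sq_norm_mul_le Aᶜ hf hfi hff hmom
  have hmom_compl : ∫ x in Aᶜ, ‖x‖ ^ 2 * f x ≤ ∫ x, ‖x‖ ^ 2 * f x :=
    setIntegral_le_integral hmom (.of_forall fun x ↦ mul_nonneg (by positivity) (hf x))
  have hsplit_entropy := integral_add_compl hA hff
  have hsplit_mass := integral_add_compl hA hfi
  linarith

end InnerProductSpace

/-- there is a constant `C > 0` such that for every probability density `f`
on `ℝ³` with finite second moment and finite entropy, and every measurable `A ⊂ ℝ³`
with `|A| < 1`, `f(A) ≤ (C + H(f) + m₂(f)) / (−log |A|)`; in particular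
`|A| ≤ exp(−4(C + H(f) + m₂(f)))` implies `f(A) ≤ 1/4`. -/
theorem statement15 :
    ∃ C : ℝ, 0 < C ∧ ∀ f : EuclideanSpace ℝ (Fin 3) → ℝ,
      (∀ x, 0 ≤ f x) → Integrable f → (∫ x, f x) = 1 →
      Integrable (fun x => f x * Real.log (f x)) →
      Integrable (fun x => ‖x‖ ^ 2 * f x) →
      ∀ A : Set (EuclideanSpace ℝ (Fin 3)), MeasurableSet A → volume A < 1 →
        ((∫ x in A, f x) ≤
          (C + (∫ x, f x * Real.log (f x)) + ∫ x, ‖x‖ ^ 2 * f x) /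
            (-Real.log (volume A).toReal)) ∧
        ((volume A).toReal ≤
            Real.exp (-4 * (C + (∫ x, f x * Real.log (f x)) + ∫ x, ‖x‖ ^ 2 * f x)) →
          (∫ x in A, f x) ≤ 1 / 4) := by
  refine ⟨π ^ ((3 : ℝ) / 2), by positivity, fun f hf hfi hf1 hff hmom A hA hvol ↦ ?_⟩
  simp only [← measureReal_def]
  rcases measureReal_nonneg.eq_or_lt with hzero | hpos
  · -- `-log 0 = 0` and `x / 0 = 0`, so the first bound reads `0 ≤ 0`.
    have hnull : volume A = 0 := (measureReal_eq_zero_iff (ne_top_of_lt hvol)).1 hzero.symm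
    simp [setIntegral_measure_zero _ hnull, ← hzero]
  have hlt : volume.real A < 1 := by
    simpa [measureReal_def] using
      (ENNReal.toReal_lt_toReal (ne_top_of_lt hvol) ENNReal.one_ne_top).2 hvol
  have hlog : 0 < -log (volume.real A) := neg_pos.2 (log_neg hpos hlt)
  have key := setIntegral_mul_neg_log_volume_le hA hpos hf hfi hf1 hff hmom
  rw [finrank_euclideanSpace_fin, Nat.cast_ofNat] at key
  refine ⟨(le_div_iff₀ hlog).2 (by linarith), fun hsmall ↦ ?_⟩
  have hsmall_log := log_le_log hpos hsmall
  rw [log_exp] at hsmall_log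
  rw [← mul_le_mul_iff_of_pos_right hlog]
  linarith
end

section
/- Let γ < 0 and r ∈ (1/2, 1). For j ≥ 1, define for a probability density F on (ℝ³)^j the weighted Fisher information I_γ(F) := j^{-1} ∫ |∇_γ F|²/F where ∇_γF = (⟨v₁⟩^{γ/2}∇_{v₁}F, …, ⟨v_j⟩^{γ/2}∇_{v_j}F) and ⟨v⟩ = (1+|v|²)^{1/2}, and the fractional Fisher information I^r(F) := j^{-1} ∫ Σᵢ |∇_{vᵢ} log F|^{2r} F. Then for any symmetric probability measure F on (ℝ³)^j: I^r(F) ≤ C_q (I_γ(F))^r (1 + m_q(F))^{1−r} with q := |γ| r / (1 − r), where m_q(F) = ∫ |v₁|^q F. -/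
/-!
Writing `⟨v⟩ = (1 + |v|²)^{1/2}` and `q (1 - r) = |γ| r`, each summand of `I^r` factors as
`|∇ᵢF|^{2r} F^{1-2r} = (⟨vᵢ⟩^γ |∇ᵢF|² / F)^r (⟨vᵢ⟩^q F)^{1-r}`, the weights cancelling.
Hölder's inequality with exponents `1/r`, `1/(1-r)`, first for the sum over `i` and then for the
integral, bounds `∫ Σᵢ |∇ᵢF|^{2r} F^{1-2r}` by `(j I_γ(F))^r (∫ Σᵢ ⟨vᵢ⟩^q F)^{1-r}`.
By exchangeability the last integral is `j ∫ ⟨v₁⟩^q F ≤ j 2^{q/2} (1 + m_q(F))`.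
-/

open MeasureTheory

noncomputable section

/-- Partial gradient of `F : (ℝ³)^j → ℝ` with respect to the `i`-th coordinate block. -/
def pgrad {j : ℕ} (F : (Fin j → EuclideanSpace ℝ (Fin 3)) → ℝ)
    (i : Fin j) (V : Fin j → EuclideanSpace ℝ (Fin 3)) : EuclideanSpace ℝ (Fin 3) :=
  gradient (fun w => F (Function.update V i w)) (V i)

theorem integrable_rpow_mul_rpow {α : Type*} [MeasurableSpace α] {μ : Measure α} {f g : α → ℝ}
    {p q : ℝ} (hf : Integrable f μ) (hg : Integrable g μ) (hf0 : 0 ≤ f) (hg0 : 0 ≤ g)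
    (hp : 0 ≤ p) (hq : 0 ≤ q) (hpq : p + q = 1) :
    Integrable (fun x => f x ^ p * g x ^ q) μ := by
  refine Integrable.mono' ((hf.const_mul p).add (hg.const_mul q))
    ((hf.aemeasurable.pow_const p).mul (hg.aemeasurable.pow_const q)).aestronglyMeasurable
    (ae_of_all _ fun x => ?_)
  rw [Real.norm_of_nonneg (mul_nonneg (Real.rpow_nonneg (hf0 x) p) (Real.rpow_nonneg (hg0 x) q))]
  exact Real.geom_mean_le_arith_mean2_weighted hp hq (hf0 x) (hg0 x) hpq

theorem integral_rpow_mul_rpow_le {α : Type*} [MeasurableSpace α] {μ : Measure α} {f g : α → ℝ}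
    {p q : ℝ} (hf : Integrable f μ) (hg : Integrable g μ) (hf0 : 0 ≤ f) (hg0 : 0 ≤ g)
    (hp : 0 ≤ p) (hq : 0 ≤ q) (hpq : p + q = 1) :
    ∫ x, f x ^ p * g x ^ q ∂μ ≤ (∫ x, f x ∂μ) ^ p * (∫ x, g x ∂μ) ^ q := by
  have hofReal : ∀ a b : ℝ, 0 ≤ a → 0 ≤ b →
      ENNReal.ofReal (a ^ p * b ^ q) = ENNReal.ofReal a ^ p * ENNReal.ofReal b ^ q :=
    fun a b ha hb => by
      rw [ENNReal.ofReal_mul (by positivity), ENNReal.ofReal_rpow_of_nonneg ha hp,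
        ENNReal.ofReal_rpow_of_nonneg hb hq]
  have hf' := integral_nonneg (μ := μ) hf0
  have hg' := integral_nonneg (μ := μ) hg0
  rw [← ENNReal.ofReal_le_ofReal_iff (by positivity), hofReal _ _ hf' hg',
    ofReal_integral_eq_lintegral_ofReal (integrable_rpow_mul_rpow hf hg hf0 hg0 hp hq hpq)
      (ae_of_all _ fun x => mul_nonneg (Real.rpow_nonneg (hf0 x) p) (Real.rpow_nonneg (hg0 x) q)),
    ofReal_integral_eq_lintegral_ofReal hf (ae_of_all _ hf0),
    ofReal_integral_eq_lintegral_ofReal hg (ae_of_all _ hg0),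
    lintegral_congr fun x => hofReal _ _ (hf0 x) (hg0 x)]
  exact ENNReal.lintegral_mul_norm_pow_le hf.aemeasurable.ennreal_ofReal
    hg.aemeasurable.ennreal_ofReal hp hq hpq

theorem integral_le_of_le_rpow_mul_rpow {α : Type*} [MeasurableSpace α] {μ : Measure α}
    {f g h : α → ℝ} {p q : ℝ} (hh : Integrable h μ) (hf : Integrable f μ) (hg : Integrable g μ)
    (hf0 : 0 ≤ f) (hg0 : 0 ≤ g) (hp : 0 ≤ p) (hq : 0 ≤ q) (hpq : p + q = 1)
    (hle : ∀ x, h x ≤ f x ^ p * g x ^ q) :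
    ∫ x, h x ∂μ ≤ (∫ x, f x ∂μ) ^ p * (∫ x, g x ∂μ) ^ q :=
  (integral_mono hh (integrable_rpow_mul_rpow hf hg hf0 hg0 hp hq hpq) hle).trans
    (integral_rpow_mul_rpow_le hf hg hf0 hg0 hp hq hpq)

theorem Finset.sum_rpow_mul_rpow_le {ι : Type*} (s : Finset ι) {f g : ι → ℝ} {p q : ℝ}
    (hf : ∀ i, 0 ≤ f i) (hg : ∀ i, 0 ≤ g i) (hp : 0 ≤ p) (hq : 0 ≤ q) (hpq : p + q = 1) :
    ∑ i ∈ s, f i ^ p * g i ^ q ≤ (∑ i ∈ s, f i) ^ p * (∑ i ∈ s, g i) ^ q := by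
  let _ : MeasurableSpace s := ⊤
  simpa [Finset.sum_attach, Finset.sum_attach s (fun i => f i ^ p * g i ^ q)] using
    integral_rpow_mul_rpow_le (μ := Measure.count) (f := fun i : s => f i)
      (g := fun i : s => g i) .of_finite .of_finite (fun i => hf i) (fun i => hg i) hp hq hpq

theorem rpow_two_mul_div_rpow_eq {γ q r t a c : ℝ} (hq : q * (1 - r) = -(γ * r))
    (ht : 0 < t) (ha : 0 ≤ a) (hc : 0 < c) :
    a ^ (2 * r) / c ^ (2 * r - 1) =
      (t ^ (γ / 2) * a ^ 2 / c) ^ r * (t ^ (q / 2) * c) ^ (1 - r) := by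
  rw [Real.div_rpow (by positivity) hc.le, Real.mul_rpow (by positivity) (by positivity),
    Real.mul_rpow (by positivity) hc.le, ← Real.rpow_mul ht.le, ← Real.rpow_mul ht.le,
    ← Real.rpow_natCast, ← Real.rpow_mul ha]
  have ht1 : t ^ (γ / 2 * r) * t ^ (q / 2 * (1 - r)) = 1 := by
    rw [← Real.rpow_add ht, show γ / 2 * r + q / 2 * (1 - r) = 0 by linarith, Real.rpow_zero]
  have hc1 : c ^ (1 - r) / c ^ r = (c ^ (2 * r - 1))⁻¹ := by
    rw [← Real.rpow_sub hc, ← Real.rpow_neg hc.le]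
    ring_nf
  calc a ^ (2 * r) / c ^ (2 * r - 1)
      = t ^ (γ / 2 * r) * t ^ (q / 2 * (1 - r)) * a ^ (2 * r) * (c ^ (1 - r) / c ^ r) := by
        rw [ht1, hc1]; ring
    _ = _ := by push_cast; ring

theorem Finset.sum_rpow_two_mul_div_rpow_le {ι : Type*} (s : Finset ι) {γ q r c : ℝ} {a t : ι → ℝ}
    (hr0 : 0 ≤ r) (hr1 : r ≤ 1) (hq : q * (1 - r) = -(γ * r))
    (ht : ∀ i, 0 < t i) (ha : ∀ i, 0 ≤ a i) (hc : 0 < c) :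
    ∑ i ∈ s, a i ^ (2 * r) / c ^ (2 * r - 1) ≤
      ((∑ i ∈ s, t i ^ (γ / 2) * a i ^ 2) / c) ^ r * (∑ i ∈ s, t i ^ (q / 2) * c) ^ (1 - r) := by
  simp_rw [fun i => rpow_two_mul_div_rpow_eq hq (ht i) (ha i) hc, Finset.sum_div]
  exact s.sum_rpow_mul_rpow_le (fun i => div_nonneg (by have := ht i; positivity) hc.le)
    (fun i => mul_nonneg (by have := ht i; positivity) hc.le) hr0 (by linarith) (by ring)

section PermInvariant

variable {ι E : Type*}

theorem apply_mul_eq_comp_swap [DecidableEq ι] {F : (ι → E) → ℝ}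
    (hF : ∀ (π : Equiv.Perm ι) V, F (V ∘ π) = F V) (w : E → ℝ) (i k : ι) (V : ι → E) :
    w (V i) * F V = w ((V ∘ Equiv.swap k i) k) * F (V ∘ Equiv.swap k i) := by
  rw [hF, Function.comp_apply, Equiv.swap_apply_left]

theorem measurableEmbedding_comp_perm [MeasurableSpace E] (π : Equiv.Perm ι) :
    MeasurableEmbedding (fun V : ι → E => V ∘ π) :=
  (MeasurableEquiv.arrowCongr' π.symm (MeasurableEquiv.refl E)).measurableEmbedding

variable [Fintype ι] [MeasureSpace E] [SigmaFinite (volume : Measure E)]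

theorem measurePreserving_comp_perm (π : Equiv.Perm ι) :
    MeasurePreserving (fun V : ι → E => V ∘ π) volume volume :=
  volume_preserving_arrowCongr' π.symm (MeasurableEquiv.refl E) (.id volume)

variable [DecidableEq ι] {F : (ι → E) → ℝ}

theorem integrable_apply_mul_of_perm_invariant (hF : ∀ (π : Equiv.Perm ι) V, F (V ∘ π) = F V)
    {w : E → ℝ} {k : ι} (hint : Integrable fun V => w (V k) * F V) (i : ι) :
    Integrable fun V => w (V i) * F V := by
  simp_rw [apply_mul_eq_comp_swap hF w i k]
  exact ((measurePreserving_comp_perm _).integrable_comp_emb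
    (measurableEmbedding_comp_perm _)).mpr hint

theorem integral_apply_mul_of_perm_invariant (hF : ∀ (π : Equiv.Perm ι) V, F (V ∘ π) = F V)
    (w : E → ℝ) (i k : ι) :
    ∫ V, w (V i) * F V = ∫ V, w (V k) * F V := by
  simp_rw [apply_mul_eq_comp_swap hF w i k]
  exact (measurePreserving_comp_perm _).integral_comp (measurableEmbedding_comp_perm _)
    (fun V => w (V k) * F V)

theorem integral_sum_apply_mul_of_perm_invariant (hF : ∀ (π : Equiv.Perm ι) V, F (V ∘ π) = F V)
    (w : E → ℝ) {k : ι} (hint : Integrable fun V => w (V k) * F V) :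
    ∫ V, ∑ i, w (V i) * F V = Fintype.card ι * ∫ V, w (V k) * F V := by
  rw [integral_finsetSum _ fun i _ => integrable_apply_mul_of_perm_invariant hF hint i]
  simp [integral_apply_mul_of_perm_invariant hF w _ k]

end PermInvariant

theorem one_add_sq_rpow_le {q x : ℝ} (hq : 0 ≤ q) (hx : 0 ≤ x) :
    (1 + x ^ 2) ^ (q / 2) ≤ 2 ^ (q / 2) * (1 + x ^ q) := by
  have hxq : 0 ≤ x ^ q := Real.rpow_nonneg hx q
  have h2 : (0 : ℝ) ≤ 2 ^ (q / 2) := by positivity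
  rcases le_total x 1 with hx1 | hx1
  · calc (1 + x ^ 2) ^ (q / 2) ≤ 2 ^ (q / 2) :=
          Real.rpow_le_rpow (by positivity) (by nlinarith) (by positivity)
      _ ≤ 2 ^ (q / 2) * (1 + x ^ q) := le_mul_of_one_le_right h2 (by linarith)
  · calc (1 + x ^ 2) ^ (q / 2) ≤ (2 * x ^ 2) ^ (q / 2) :=
          Real.rpow_le_rpow (by positivity) (by nlinarith) (by positivity)
      _ = 2 ^ (q / 2) * x ^ q := by
          rw [Real.mul_rpow zero_le_two (by positivity), ← Real.rpow_natCast,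
            ← Real.rpow_mul hx]
          push_cast
          ring_nf
      _ ≤ 2 ^ (q / 2) * (1 + x ^ q) := by gcongr; linarith

theorem integral_one_add_sq_rpow_mul_le {α E : Type*} [MeasurableSpace α] {μ : Measure α}
    [NormedAddCommGroup E] {X : α → E} {F : α → ℝ} {q : ℝ} (hq : 0 ≤ q)
    (hX : AEStronglyMeasurable X μ) (hF0 : 0 ≤ F) (hF : Integrable F μ)
    (hmom : Integrable (fun x => ‖X x‖ ^ q * F x) μ) :
    Integrable (fun x => (1 + ‖X x‖ ^ 2) ^ (q / 2) * F x) μ ∧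
      ∫ x, (1 + ‖X x‖ ^ 2) ^ (q / 2) * F x ∂μ ≤
        2 ^ (q / 2) * (∫ x, F x ∂μ + ∫ x, ‖X x‖ ^ q * F x ∂μ) := by
  have hbound : ∀ x, (1 + ‖X x‖ ^ 2) ^ (q / 2) * F x ≤ 2 ^ (q / 2) * (F x + ‖X x‖ ^ q * F x) :=
    fun x => by
      have := mul_le_mul_of_nonneg_right (one_add_sq_rpow_le hq (norm_nonneg (X x))) (hF0 x)
      linarith
  have hdom : Integrable (fun x => 2 ^ (q / 2) * (F x + ‖X x‖ ^ q * F x)) μ :=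
    (hF.add hmom).const_mul _
  have hint : Integrable (fun x => (1 + ‖X x‖ ^ 2) ^ (q / 2) * F x) μ :=
    hdom.mono' ((((hX.norm.aemeasurable.pow_const 2).const_add 1).pow_const (q / 2)).mul
      hF.aemeasurable).aestronglyMeasurable
      (ae_of_all _ fun x => by
        rw [Real.norm_of_nonneg (mul_nonneg (by positivity) (hF0 x))]
        exact hbound x)
  refine ⟨hint, (integral_mono hint hdom hbound).trans_eq ?_⟩
  rw [integral_const_mul, integral_add hF hmom]

theorem integral_sum_one_add_sq_rpow_mul_le {ι E : Type*} [Fintype ι] [DecidableEq ι]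
    [MeasureSpace E] [SigmaFinite (volume : Measure E)] [NormedAddCommGroup E]
    {F : (ι → E) → ℝ} {q : ℝ} {k : ι} (hq : 0 ≤ q)
    (hsym : ∀ (π : Equiv.Perm ι) V, F (V ∘ π) = F V) (hF0 : 0 ≤ F) (hF : Integrable F)
    (hk : AEStronglyMeasurable fun V : ι → E => V k)
    (hmom : Integrable fun V => ‖V k‖ ^ q * F V) :
    Integrable (fun V => ∑ i, (1 + ‖V i‖ ^ 2) ^ (q / 2) * F V) ∧
      ∫ V, ∑ i, (1 + ‖V i‖ ^ 2) ^ (q / 2) * F V ≤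
        Fintype.card ι * (2 ^ (q / 2) * ((∫ V, F V) + ∫ V, ‖V k‖ ^ q * F V)) := by
  obtain ⟨hint, hle⟩ := integral_one_add_sq_rpow_mul_le hq hk hF0 hF hmom
  refine ⟨integrable_finsetSum _ fun i _ =>
    integrable_apply_mul_of_perm_invariant (w := fun v => (1 + ‖v‖ ^ 2) ^ (q / 2)) hsym hint i, ?_⟩
  rw [integral_sum_apply_mul_of_perm_invariant hsym (fun v => (1 + ‖v‖ ^ 2) ^ (q / 2)) hint]
  gcongr

theorem inv_mul_le_rpow_mul_rpow {n a b x y r : ℝ} (hn : 0 < n) (ha : 0 ≤ a) (hy : 0 ≤ y)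
    (hr1 : r ≤ 1) (hx : x ≤ a ^ r * y ^ (1 - r)) (hyb : y ≤ n * b) :
    n⁻¹ * x ≤ (n⁻¹ * a) ^ r * b ^ (1 - r) := by
  have hb : 0 ≤ b := nonneg_of_mul_nonneg_right (hy.trans hyb) hn
  calc n⁻¹ * x ≤ n⁻¹ * (a ^ r * (n * b) ^ (1 - r)) := by
        gcongr
        exact hx.trans (by gcongr)
    _ = (n⁻¹ * a) ^ r * b ^ (1 - r) := by
        rw [Real.mul_rpow hn.le hb, Real.mul_rpow (inv_nonneg.2 hn.le) ha, Real.inv_rpow hn.le,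
          Real.rpow_sub hn, Real.rpow_one]
        field_simp

/-- for `γ < 0` and `r ∈ (1/2,1)`, with `q = |γ| r/(1−r)`, there is a
constant `C_q` such that for every `j ≥ 1` and every (smooth, positive) symmetric
probability density `F` on `(ℝ³)^j`,
`I^r(F) ≤ C_q (I_γ(F))^r (1 + m_q(F))^{1−r}`, where
`I^r(F) = j⁻¹ ∫ Σᵢ |∇_{vᵢ} log F|^{2r} F`, `I_γ(F) = j⁻¹ ∫ Σᵢ ⟨vᵢ⟩^γ |∇_{vᵢ} log F|² F`
and `m_q(F) = ∫ |v₁|^q F`. -/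
theorem statement16 (γ r : ℝ) (hγ : γ < 0) (hr : r ∈ Set.Ioo (1 / 2 : ℝ) 1) :
    ∃ C : ℝ, 0 < C ∧ ∀ (j : ℕ) (hj : 1 ≤ j)
      (F : (Fin j → EuclideanSpace ℝ (Fin 3)) → ℝ),
      (∀ V, 0 < F V) → Differentiable ℝ F → Integrable F → (∫ V, F V) = 1 →
      (∀ (π : Equiv.Perm (Fin j)) V, F (V ∘ π) = F V) →
      Integrable (fun V =>
        (∑ i, (1 + ‖V i‖ ^ 2) ^ (γ / 2) * ‖pgrad F i V‖ ^ 2) / F V) →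
      Integrable (fun V => ∑ i, ‖pgrad F i V‖ ^ (2 * r) / F V ^ (2 * r - 1)) →
      Integrable (fun V => ‖V ⟨0, hj⟩‖ ^ (|γ| * r / (1 - r)) * F V) →
      (j : ℝ)⁻¹ * (∫ V, ∑ i, ‖pgrad F i V‖ ^ (2 * r) / F V ^ (2 * r - 1)) ≤
        C * ((j : ℝ)⁻¹ *
            ∫ V, (∑ i, (1 + ‖V i‖ ^ 2) ^ (γ / 2) * ‖pgrad F i V‖ ^ 2) / F V) ^ r *
          (1 + ∫ V, ‖V ⟨0, hj⟩‖ ^ (|γ| * r / (1 - r)) * F V) ^ (1 - r) := by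
  obtain ⟨hr1, hr2⟩ := hr
  set q := |γ| * r / (1 - r)
  have hq0 : 0 ≤ q := div_nonneg (by positivity) (by linarith)
  have hq : q * (1 - r) = -(γ * r) := by
    rw [div_mul_cancel₀ _ (by linarith), abs_of_neg hγ]; ring
  refine ⟨(2 ^ (q / 2)) ^ (1 - r), by positivity, ?_⟩
  intro j hj F hF _ hFi hF1 hsym hAint hHint hmom
  set A := fun V => (∑ i, (1 + ‖V i‖ ^ 2) ^ (γ / 2) * ‖pgrad F i V‖ ^ 2) / F V
  set B := fun V : Fin j → EuclideanSpace ℝ (Fin 3) => ∑ i, (1 + ‖V i‖ ^ 2) ^ (q / 2) * F V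
  set m := ∫ V, ‖V ⟨0, hj⟩‖ ^ q * F V
  have hF0 : 0 ≤ F := fun V => (hF V).le
  have hA0 : 0 ≤ A := fun V => div_nonneg (Finset.sum_nonneg fun i _ => by positivity) (hF0 V)
  have hB0 : 0 ≤ B := fun V => Finset.sum_nonneg fun i _ => mul_nonneg (by positivity) (hF0 V)
  obtain ⟨hBint, hBle⟩ := integral_sum_one_add_sq_rpow_mul_le hq0 hsym hF0 hFi
    (continuous_apply (⟨0, hj⟩ : Fin j)).aestronglyMeasurable hmom
  rw [hF1, Fintype.card_fin] at hBle
  have hHolder : ∫ V, ∑ i, ‖pgrad F i V‖ ^ (2 * r) / F V ^ (2 * r - 1) ≤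
      (∫ V, A V) ^ r * (∫ V, B V) ^ (1 - r) :=
    integral_le_of_le_rpow_mul_rpow hHint hAint hBint hA0 hB0 (by linarith) (by linarith)
      (by ring) fun V => Finset.univ.sum_rpow_two_mul_div_rpow_le (by linarith) hr2.le hq
        (fun i => by positivity) (fun i => norm_nonneg _) (hF V)
  calc _ ≤ ((j : ℝ)⁻¹ * ∫ V, A V) ^ r * (2 ^ (q / 2) * (1 + m)) ^ (1 - r) :=
        inv_mul_le_rpow_mul_rpow (by positivity) (integral_nonneg hA0) (integral_nonneg hB0)
          hr2.le hHolder hBle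
    _ = _ := by
        have hm0 : 0 ≤ m := integral_nonneg fun V => mul_nonneg (by positivity) (hF0 V)
        rw [Real.mul_rpow (x := 2 ^ (q / 2)) (by positivity) (by linarith)]
        ring
end
end

section
/- Let r ∈ (1/2, 1]. The function Ψ_r : (0,∞) × ℝ³ → ℝ defined by Ψ_r(a, b) := |b|^{2r} / a^{2r−1} is jointly convex in (a, b). -/
noncomputable section

/-- Two-term Radon inequality: `(x+y)^p/(a+b)^(p-1) ≤ x^p/a^(p-1) + y^p/b^(p-1)`. -/
lemma radon_aux (p : ℝ) (hp : 1 ≤ p) {x y a b : ℝ} (hx : 0 ≤ x) (hy : 0 ≤ y)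
    (ha : 0 < a) (hb : 0 < b) :
    (x + y) ^ p / (a + b) ^ (p - 1) ≤ x ^ p / a ^ (p - 1) + y ^ p / b ^ (p - 1) := by
  have hab : 0 < a + b := by linarith
  have hmemx : x / a ∈ Set.Ici (0:ℝ) := Set.mem_Ici.2 (div_nonneg hx ha.le)
  have hmemy : y / b ∈ Set.Ici (0:ℝ) := Set.mem_Ici.2 (div_nonneg hy hb.le)
  have hwa : (0:ℝ) ≤ a / (a + b) := div_nonneg ha.le hab.le
  have hwb : (0:ℝ) ≤ b / (a + b) := div_nonneg hb.le hab.le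
  have hsum : a / (a + b) + b / (a + b) = 1 := by field_simp
  have h := (convexOn_rpow hp).2 hmemx hmemy hwa hwb hsum
  simp only [smul_eq_mul] at h
  have e1 : a / (a + b) * (x / a) + b / (a + b) * (y / b) = (x + y) / (a + b) := by
    field_simp
  rw [e1] at h
  have ka : a ^ p = a ^ (p - 1) * a := by
    rw [← Real.rpow_add_one ha.ne' (p - 1)]; ring_nf
  have kb : b ^ p = b ^ (p - 1) * b := by
    rw [← Real.rpow_add_one hb.ne' (p - 1)]; ring_nf
  have kab : (a + b) ^ p = (a + b) ^ (p - 1) * (a + b) := by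
    rw [← Real.rpow_add_one hab.ne' (p - 1)]; ring_nf
  have hap : (0:ℝ) < a ^ (p - 1) := Real.rpow_pos_of_pos ha _
  have hbp : (0:ℝ) < b ^ (p - 1) := Real.rpow_pos_of_pos hb _
  have habp : (0:ℝ) < (a + b) ^ (p - 1) := Real.rpow_pos_of_pos hab _
  calc (x + y) ^ p / (a + b) ^ (p - 1)
      = (a + b) * ((x + y) / (a + b)) ^ p := by
        rw [Real.div_rpow (add_nonneg hx hy) hab.le, kab]; field_simp
    _ ≤ (a + b) * (a / (a + b) * (x / a) ^ p + b / (a + b) * (y / b) ^ p) :=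
        mul_le_mul_of_nonneg_left h hab.le
    _ = x ^ p / a ^ (p - 1) + y ^ p / b ^ (p - 1) := by
        rw [Real.div_rpow hx ha.le, Real.div_rpow hy hb.le, ka, kb]
        field_simp

/-- for `r ∈ (1/2, 1]`, the function `Ψ_r(a,b) = |b|^{2r}/a^{2r−1}` is
jointly convex on `(0,∞) × ℝ³`. -/
theorem statement17 (r : ℝ) (hr : r ∈ Set.Ioc (1 / 2 : ℝ) 1) :
    ConvexOn ℝ (Set.Ioi (0 : ℝ) ×ˢ (Set.univ : Set (EuclideanSpace ℝ (Fin 3))))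
      (fun p : ℝ × EuclideanSpace ℝ (Fin 3) => ‖p.2‖ ^ (2 * r) / p.1 ^ (2 * r - 1)) := by
  obtain ⟨hr1, hr2⟩ := hr
  set p := 2 * r with hpdef
  have hp1 : 1 < p := by simp only [hpdef]; linarith
  constructor
  · exact (convex_Ioi 0).prod convex_univ
  rintro ⟨a₁, b₁⟩ ⟨ha₁, -⟩ ⟨a₂, b₂⟩ ⟨ha₂, -⟩ t s ht hs hts
  simp only [Set.mem_Ioi] at ha₁ ha₂
  simp only [Prod.smul_mk, Prod.mk_add_mk, smul_eq_mul]
  rcases ht.eq_or_lt with rfl | ht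
  · simp only [zero_add, zero_mul] at hts ⊢
    rw [hts]; simp
  rcases hs.eq_or_lt with rfl | hs
  · simp only [add_zero, zero_mul] at hts ⊢
    rw [hts]; simp
  have h1 : ‖t • b₁ + s • b₂‖ ≤ t * ‖b₁‖ + s * ‖b₂‖ := by
    refine (norm_add_le _ _).trans ?_
    rw [norm_smul, norm_smul, Real.norm_eq_abs, Real.norm_eq_abs,
      abs_of_pos ht, abs_of_pos hs]
  have hta : 0 < t * a₁ := mul_pos ht ha₁
  have hsa : 0 < s * a₂ := mul_pos hs ha₂
  have h2 : ‖t • b₁ + s • b₂‖ ^ p ≤ (t * ‖b₁‖ + s * ‖b₂‖) ^ p :=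
    Real.rpow_le_rpow (norm_nonneg _) h1 (by linarith)
  have habp : (0:ℝ) < (t * a₁ + s * a₂) ^ (p - 1) :=
    Real.rpow_pos_of_pos (by linarith) _
  have key := radon_aux p hp1.le (mul_nonneg ht.le (norm_nonneg b₁))
    (mul_nonneg hs.le (norm_nonneg b₂)) hta hsa
  have scale : ∀ c a : ℝ, 0 < c → 0 < a → ∀ x : ℝ, 0 ≤ x →
      (c * x) ^ p / (c * a) ^ (p - 1) = c * (x ^ p / a ^ (p - 1)) := by
    intro c a hc hha x hhx
    rw [Real.mul_rpow hc.le hhx, Real.mul_rpow hc.le hha.le]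
    have kc : c ^ p = c ^ (p - 1) * c := by
      rw [← Real.rpow_add_one hc.ne' (p - 1)]; ring_nf
    have hcp : (0:ℝ) < c ^ (p - 1) := Real.rpow_pos_of_pos hc _
    have hap : (0:ℝ) < a ^ (p - 1) := Real.rpow_pos_of_pos hha _
    rw [kc]; field_simp
  rw [scale t a₁ ht ha₁ ‖b₁‖ (norm_nonneg _), scale s a₂ hs ha₂ ‖b₂‖ (norm_nonneg _)] at key
  calc ‖t • b₁ + s • b₂‖ ^ p / (t * a₁ + s * a₂) ^ (p - 1)
      ≤ (t * ‖b₁‖ + s * ‖b₂‖) ^ p / (t * a₁ + s * a₂) ^ (p - 1) := by gcongr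
    _ ≤ t * (‖b₁‖ ^ p / a₁ ^ (p - 1)) + s * (‖b₂‖ ^ p / a₂ ^ (p - 1)) := key
end
end
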